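/- arXiv:1605.08538 — 8 statements merged into one kernel-verified Lean document; each statement's English description precedes it below -/
import Mathlib

section
/- Let C ⊆ ℝ^n be a closed convex set and φ : ℝ^n → ℝ^d be an affine map such that P := φ(C) is a polytope. Then there exists an affine subspace L of ℝ^n such that C ∩ L is bounded and φ(C ∩ L) = P. -/
open Metric Set

noncomputable section

/-- A polytope: convex hull of a finite set. -/
def IsPolytope {d : ℕ} (P : Set (EuclideanSpace ℝ (Fin d))) : Prop :=
  ∃ V : Finset (EuclideanSpace ℝ (Fin d)), P = convexHull ℝ (V : Set (EuclideanSpace ℝ (Fin d)))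

/-- `P` has an extended formulation with `l` LMIs of size `m`. -/
def HasSdpExtBlocks {d : ℕ} (P : Set (EuclideanSpace ℝ (Fin d))) (l m : ℕ) : Prop :=
  ∃ (n : ℕ) (φ : EuclideanSpace ℝ (Fin n) →ᵃ[ℝ] EuclideanSpace ℝ (Fin d))
    (M : Fin l → (EuclideanSpace ℝ (Fin n) →ᵃ[ℝ] Matrix (Fin m) (Fin m) ℝ)),
    (∀ i x, (M i x).IsSymm) ∧ P = φ '' {x | ∀ i, (M i x).PosSemidef}

/-- `P` has an extended formulation with a single LMI of size `k`. -/
def HasSdpExt {d : ℕ} (P : Set (EuclideanSpace ℝ (Fin d))) (k : ℕ) : Prop :=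
  ∃ (n : ℕ) (φ : EuclideanSpace ℝ (Fin n) →ᵃ[ℝ] EuclideanSpace ℝ (Fin d))
    (M : EuclideanSpace ℝ (Fin n) →ᵃ[ℝ] Matrix (Fin k) (Fin k) ℝ),
    (∀ x, (M x).IsSymm) ∧ P = φ '' {x | (M x).PosSemidef}

/-- `P` has an extended formulation with `l` linear inequalities. -/
def HasLinExt {d : ℕ} (P : Set (EuclideanSpace ℝ (Fin d))) (l : ℕ) : Prop :=
  ∃ (n : ℕ) (φ : EuclideanSpace ℝ (Fin n) →ᵃ[ℝ] EuclideanSpace ℝ (Fin d))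
    (a : Fin l → (EuclideanSpace ℝ (Fin n) →ᵃ[ℝ] ℝ)),
    P = φ '' {x | ∀ i, 0 ≤ a i x}

open Classical in
/-- Semidefinite extension complexity. -/
def sxc {d : ℕ} (P : Set (EuclideanSpace ℝ (Fin d))) : ℕ :=
  if P = ∅ ∨ ∃ p, P = {p} then 0 else sInf {k | HasSdpExt P k}

open Classical in
/-- Linear extension complexity. -/
def xc {d : ℕ} (P : Set (EuclideanSpace ℝ (Fin d))) : ℕ :=
  if P = ∅ ∨ ∃ p, P = {p} then 0 else sInf {l | HasLinExt P l}

/-- Spectral norm of a square real matrix (the operator norm of the induced map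
on Euclidean space; for a symmetric matrix this is the largest absolute value of
an eigenvalue). -/
def specNorm {ι : Type*} [Fintype ι] [DecidableEq ι] (T : Matrix ι ι ℝ) : ℝ :=
  ‖LinearMap.toContinuousLinearMap (Matrix.toEuclideanLin T)‖

/-- Norm of a linear map into square matrices: the maximum of the spectral norm
of the values over the unit ball. -/
def lmNorm {n : ℕ} {ι : Type*} [Fintype ι] [DecidableEq ι]
    (A : EuclideanSpace ℝ (Fin n) →ₗ[ℝ] Matrix ι ι ℝ) : ℝ :=
  sSup {r | ∃ x : EuclideanSpace ℝ (Fin n), ‖x‖ ≤ 1 ∧ r = specNorm (A x)}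

/-- A 0/1-polytope: the convex hull of a set of 0/1-vectors. -/
def IsZeroOnePolytope {d : ℕ} (P : Set (EuclideanSpace ℝ (Fin d))) : Prop :=
  ∃ V : Set (EuclideanSpace ℝ (Fin d)),
    V ⊆ {x | ∀ i, x i = 0 ∨ x i = 1} ∧ P = convexHull ℝ V

/-!
Among the affine subspaces `L` with `φ (C ∩ L) = φ C`, take one of minimal dimension. If `C ∩ L`
were unbounded, then, being closed and convex, it would contain every ray `x + ℝ≥0 • v` for some
direction `v ≠ 0` of `L`, and `φ` is constant along `v` because `φ C` is bounded. Lift the vertices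
of the polytope into `C ∩ L` and push each convex combination of the lifts along `v` up to a common
level `α` of a functional `ℓ` with `ℓ v = 1`: the section of `L` by the hyperplane `ℓ = α` still
maps onto `φ C` and has smaller dimension.
-/

open Bornology Module

theorem mem_asymptoticCone_of_forall_smul_add_mem {E : Type*} [AddCommGroup E] [Module ℝ E]
    [TopologicalSpace E] [IsTopologicalAddGroup E] [ContinuousSMul ℝ E] {s : Set E} {v x : E}
    (hray : ∀ c : ℝ, 0 ≤ c → c • v + x ∈ s) : v ∈ asymptoticCone ℝ s :=
  (Filter.tendsto_id.atTop_smul_const_tendsto_asymptoticNhds v).asymptoticNhds_vadd_const x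
    |>.frequently (Filter.eventually_ge_atTop 0 |>.mono hray).frequently

theorem AffineMap.linear_eq_zero_of_isBounded_image {E F : Type*} [AddCommGroup E] [Module ℝ E]
    [NormedAddCommGroup F] [NormedSpace ℝ F] {s : Set E} (φ : E →ᵃ[ℝ] F)
    (hs : IsBounded (φ '' s)) {v x : E} (hray : ∀ c : ℝ, 0 ≤ c → c • v + x ∈ s) :
    φ.linear v = 0 := by
  refine asymptoticCone_subset_singleton_of_bounded hs (mem_asymptoticCone_of_forall_smul_add_mem
    (x := φ x) fun c hc => ⟨_, hray c hc, ?_⟩)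
  rw [← vadd_eq_add, φ.map_vadd, map_smul, vadd_eq_add]

theorem Convex.exists_convexHull_subset_image_inter_level {E F : Type*} [AddCommGroup E]
    [Module ℝ E] [AddCommGroup F] [Module ℝ F] {S : Set E} (hS : Convex ℝ S) {v : E}
    (hray : ∀ x ∈ S, ∀ c : ℝ, 0 ≤ c → c • v + x ∈ S) (φ : E →ᵃ[ℝ] F) (hφv : φ.linear v = 0)
    (ℓ : E →ₗ[ℝ] ℝ) (hℓv : ℓ v = 1) {V : Set F} (hV : V.Finite) (hVS : V ⊆ φ '' S) :
    ∃ α : ℝ, convexHull ℝ V ⊆ φ '' (S ∩ {x | ℓ x = α}) := by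
  choose! g hgS hgφ using hVS
  obtain ⟨α, hα⟩ := (hV.image (ℓ ∘ g)).bddAbove
  refine ⟨α, ?_⟩
  have hlift : convexHull ℝ (g '' V) ⊆ S ∩ {x | ℓ x ≤ α} :=
    convexHull_min (by rintro _ ⟨p, hp, rfl⟩; exact ⟨hgS hp, hα ⟨p, hp, rfl⟩⟩)
      (hS.inter (convex_halfSpace_le ℓ.isLinear α))
  have hφg : φ '' (g '' V) = V := by
    rw [Set.image_image]; exact (Set.image_congr hgφ).trans (Set.image_id' V)
  rintro _ hp
  rw [← hφg, ← φ.image_convexHull] at hp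
  obtain ⟨y, hy, rfl⟩ := hp
  obtain ⟨hyS, hyα⟩ := hlift hy
  refine ⟨(α - ℓ y) • v + y, ⟨hray y hyS _ (sub_nonneg.2 hyα), ?_⟩, ?_⟩
  · simp [hℓv]
  · rw [← vadd_eq_add, φ.map_vadd, map_smul, hφv, smul_zero, zero_vadd]

theorem AffineSubspace.coe_mk'_smul_ker {E : Type*} [AddCommGroup E] [Module ℝ E]
    {ℓ : E →ₗ[ℝ] ℝ} {v : E} (hℓv : ℓ v = 1) (α : ℝ) :
    (AffineSubspace.mk' (α • v) (LinearMap.ker ℓ) : Set E) = {x | ℓ x = α} := by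
  ext x
  simp [AffineSubspace.mem_mk', hℓv, sub_eq_zero]

section FiniteDimensional

variable {E F : Type*} [NormedAddCommGroup E] [NormedSpace ℝ E] [FiniteDimensional ℝ E]
  [NormedAddCommGroup F] [NormedSpace ℝ F]

theorem exists_finrank_direction_lt_of_not_isBounded {C : Set E} (hclosed : IsClosed C)
    (hconv : Convex ℝ C) (φ : E →ᵃ[ℝ] F) {V : Set F} (hV : V.Finite)
    (hP : φ '' C = convexHull ℝ V) {L : AffineSubspace ℝ E} (hL : φ '' (C ∩ L) = φ '' C)
    (hunb : ¬ IsBounded (C ∩ L)) :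
    ∃ L' : AffineSubspace ℝ E,
      finrank ℝ L'.direction < finrank ℝ L.direction ∧ φ '' (C ∩ L') = φ '' C := by
  have hSclosed : IsClosed (C ∩ L) := hclosed.inter L.closed_of_finiteDimensional
  have hSconv : Convex ℝ (C ∩ L) := hconv.inter L.convex
  obtain ⟨v, hv0, hv⟩ := not_bounded_iff_exists_ne_zero_mem_asymptoticCone.1 hunb
  have hray : ∀ x ∈ C ∩ L, ∀ c : ℝ, 0 ≤ c → c • v + x ∈ C ∩ L := fun x hx c hc =>
    hSconv.smul_vadd_mem_of_isClosed_of_mem_asymptoticCone hSclosed hc hv hx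
  obtain ⟨x, hx⟩ := (asymptoticCone_nonempty (k := ℝ)).1 ⟨v, hv⟩
  have hvL : v ∈ L.direction := by
    simpa using L.vsub_mem_direction (hray x hx 1 zero_le_one).2 hx.2
  have hLP : φ '' (C ∩ L) = convexHull ℝ V := hL.trans hP
  have hφv : φ.linear v = 0 := φ.linear_eq_zero_of_isBounded_image
    (hLP ▸ isBounded_convexHull.2 hV.isBounded) (hray x hx)
  obtain ⟨ℓ, hℓv⟩ := Module.Projective.exists_dual_eq_one ℝ hv0
  obtain ⟨α, hα⟩ := hSconv.exists_convexHull_subset_image_inter_level hray φ hφv ℓ hℓv hV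
    (hLP ▸ subset_convexHull ℝ V)
  refine ⟨L ⊓ AffineSubspace.mk' (α • v) (LinearMap.ker ℓ), ?_, ?_⟩
  · have hlt : L.direction ⊓ LinearMap.ker ℓ < L.direction :=
      inf_lt_left.2 fun hle => by simpa [hℓv] using hle hvL
    calc finrank ℝ (L ⊓ AffineSubspace.mk' (α • v) (LinearMap.ker ℓ)).direction
        ≤ finrank ℝ ↥(L.direction ⊓ LinearMap.ker ℓ) := Submodule.finrank_mono (by
          simpa using AffineSubspace.direction_inf L (AffineSubspace.mk' (α • v) _))
      _ < finrank ℝ L.direction := Submodule.finrank_lt_finrank_of_lt hlt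
  · refine subset_antisymm ?_ (hP ▸ hα.trans ?_)
    · exact hL ▸ Set.image_mono (Set.inter_subset_inter_right C (SetLike.coe_mono inf_le_left))
    rintro _ ⟨x, ⟨⟨hxC, hxL⟩, hxα⟩, rfl⟩
    exact ⟨x, ⟨hxC, hxL, (AffineSubspace.coe_mk'_smul_ker hℓv α).symm ▸ hxα⟩, rfl⟩

theorem exists_affineSubspace_isBounded_inter_image_eq {C : Set E} (hclosed : IsClosed C)
    (hconv : Convex ℝ C) (φ : E →ᵃ[ℝ] F) {V : Set F} (hV : V.Finite)
    (hP : φ '' C = convexHull ℝ V) :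
    ∃ L : AffineSubspace ℝ E, IsBounded (C ∩ L) ∧ φ '' (C ∩ L) = φ '' C := by
  classical
  have hex : ∃ k, ∃ L : AffineSubspace ℝ E,
      finrank ℝ L.direction = k ∧ φ '' (C ∩ L) = φ '' C :=
    ⟨_, ⊤, rfl, by simp⟩
  obtain ⟨L, hLk, hL⟩ := Nat.find_spec hex
  refine ⟨L, by_contra fun hunb => ?_, hL⟩
  obtain ⟨L', hlt, hL'⟩ :=
    exists_finrank_direction_lt_of_not_isBounded hclosed hconv φ hV hP hL hunb
  exact Nat.find_min hex (hLk ▸ hlt) ⟨L', rfl, hL'⟩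

end FiniteDimensional

theorem statement3 (n d : ℕ) (C : Set (EuclideanSpace ℝ (Fin n)))
    (hclosed : IsClosed C) (hconv : Convex ℝ C)
    (φ : EuclideanSpace ℝ (Fin n) →ᵃ[ℝ] EuclideanSpace ℝ (Fin d))
    (hP : IsPolytope (φ '' C)) :
    ∃ L : AffineSubspace ℝ (EuclideanSpace ℝ (Fin n)),
      (L : Set (EuclideanSpace ℝ (Fin n))).Nonempty ∧
      Bornology.IsBounded (C ∩ (L : Set (EuclideanSpace ℝ (Fin n)))) ∧
      φ '' (C ∩ (L : Set (EuclideanSpace ℝ (Fin n)))) = φ '' C := by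
  rcases C.eq_empty_or_nonempty with rfl | hC
  · exact ⟨⊤, by simp, by simp, by simp⟩
  obtain ⟨V, hV⟩ := hP
  obtain ⟨L, hbdd, hL⟩ :=
    exists_affineSubspace_isBounded_inter_image_eq hclosed hconv φ V.finite_toSet hV
  obtain ⟨_, ⟨x, hx, -⟩⟩ := hL ▸ hC.image φ
  exact ⟨L, ⟨x, hx.2⟩, hbdd, hL⟩
end
end

section
/- Let Q be a compact convex subset of ℝ^n with non-empty interior. Then there exists an affine bijection φ : ℝ^n → ℝ^n such that B^n ⊆ φ(Q) ⊆ n·B^n, where B^n is the Euclidean closed unit ball in ℝ^n. -/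
open Metric Set

noncomputable section

/-!
Among the affine images `L(B) + c ⊆ Q` of the unit ball `B`, a compact family, choose one
maximizing `|det L|`; it is nondegenerate because `Q` has interior points. Let `φ` map it back
to `B`, and suppose `φ(Q)` contains `p = s u` with `‖u‖ = 1` and `s > n`. Then `φ(Q)` contains
the convex hull of `B` and `p`, and this hull contains the ellipsoid obtained from `B` by
stretching by `1 + ε` along `u`, shrinking by `b = √(1 - 2ε/(s - 1))` orthogonally to `u` and
shifting by `ε u`. Its volume ratio `(1 + ε) b^(n-1)` exceeds `1` for small `ε > 0` precisely
because `s > n`, contradicting maximality.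
-/

open Module
open scoped InnerProductSpace

theorem exists_stretch_params {m : ℕ} {s : ℝ} (hs : (m : ℝ) + 1 < s) :
    ∃ ε b : ℝ, 0 < ε ∧ 4 * ε ≤ s - 1 ∧ b ^ 2 * (s - 1) = s - 1 - 2 * ε ∧
      1 < (1 + ε) * b ^ m := by
  have hm : (0 : ℝ) ≤ m := m.cast_nonneg
  -- By Bernoulli, `(1 + ε)² (b²)^m ≥ (1 + ε)² (1 - 2εm / (s - 1))`; for this `ε` the first-order
  -- gain `2ε (s - 1 - m) / (s - 1)` outweighs the higher-order terms.
  obtain ⟨ε, hε, hεs⟩ : ∃ ε : ℝ, 0 < ε ∧ 4 * ε * (m + 1) = s - 1 - m :=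
    ⟨(s - 1 - m) / (4 * (m + 1)), div_pos (by linarith) (by positivity), by field_simp⟩
  have h4ε : 4 * ε ≤ s - 1 := by nlinarith
  have hs1 : 0 < s - 1 := by linarith
  set β := 1 - 2 * ε / (s - 1) with hβ
  have hβs : β * (s - 1) = s - 1 - 2 * ε := by rw [hβ]; field_simp
  have hβ0 : 0 < β := by nlinarith
  refine ⟨ε, √β, hε, h4ε, by rw [Real.sq_sqrt hβ0.le, hβs], ?_⟩
  refine (one_lt_sq_iff₀ (by positivity)).1 ?_
  rw [mul_pow, ← pow_mul, mul_comm m, pow_mul, Real.sq_sqrt hβ0.le]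
  have hmβ : m * (β - 1) * (s - 1) = -2 * ε * m := by linear_combination m * hβs
  calc 1 < (1 + ε) ^ 2 * (1 + m * (β - 1)) := by
        nlinarith [mul_pos hε hε, mul_pos (mul_pos hε hε) hε]
    _ ≤ (1 + ε) ^ 2 * β ^ m := by
        gcongr
        simpa using one_add_mul_le_pow (a := β - 1) (by nlinarith) m

theorem sq_add_sq_le_one_of_ellipsoid_cap {s ε b ζ η : ℝ} (hε : 0 < ε) (h4ε : 4 * ε ≤ s - 1)
    (hb : b ^ 2 * (s - 1) = s - 1 - 2 * ε) (hζη : b ^ 2 * ζ ^ 2 + η ^ 2 ≤ b ^ 2)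
    (hξ : s * ((1 + ε) * ζ + ε) ≤ 1) : ((1 + ε) * ζ + ε) ^ 2 + η ^ 2 ≤ 1 := by
  have hs : 0 < s - 1 := by linarith
  have hζ : ζ ^ 2 ≤ 1 ^ 2 :=
    le_of_mul_le_mul_left (by nlinarith [sq_nonneg η]) (by nlinarith : 0 < b ^ 2)
  have hζ1 : 0 ≤ 1 + ζ := by linarith [(abs_le_of_sq_le_sq' hζ zero_le_one).1]
  have key : (s - 1) * ((2 + ε) * ζ + ε) ≤ 2 * (1 - ζ) := by
    refine le_of_mul_le_mul_left ?_ (mul_pos (by linarith) (by linarith) : 0 < s * (1 + ε))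
    nlinarith [mul_le_mul_of_nonneg_left hξ (by positivity : 0 ≤ (s - 1) * (2 + ε) + 2),
      mul_nonneg hε.le (sq_nonneg (s + 1))]
  nlinarith [mul_le_mul_of_nonneg_left key (mul_nonneg hε.le hζ1)]

theorem add_mul_le_of_ellipsoid {s ε b ζ η V : ℝ} (hε : 0 < ε) (h4ε : 4 * ε ≤ s - 1)
    (hb : b ^ 2 * (s - 1) = s - 1 - 2 * ε) (hζη : b ^ 2 * ζ ^ 2 + η ^ 2 ≤ b ^ 2)
    (hV2 : V ^ 2 = s ^ 2 - 1) : (1 + ε) * ζ + ε + V * η ≤ s := by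
  -- This identity, which dictates `b`, says that the ellipsoid touches the cone.
  have hsum : (1 + ε) ^ 2 + b ^ 2 * V ^ 2 = (s - ε) ^ 2 := by
    rw [hV2]; linear_combination (s + 1) * hb
  have hCS : (b * ((1 + ε) * ζ + V * η)) ^ 2 ≤
      ((1 + ε) ^ 2 + b ^ 2 * V ^ 2) * (b ^ 2 * ζ ^ 2 + η ^ 2) := by
    nlinarith [sq_nonneg ((1 + ε) * η - b * V * (b * ζ))]
  have : ((1 + ε) * ζ + V * η) ^ 2 ≤ (s - ε) ^ 2 := by
    rw [hsum] at hCS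
    nlinarith [mul_le_mul_of_nonneg_left hζη (sq_nonneg (s - ε))]
  linarith [(abs_le_of_sq_le_sq' this (by linarith)).2]

section MaximalEllipsoid

variable {F : Type*} [NormedAddCommGroup F] [NormedSpace ℝ F] [FiniteDimensional ℝ F]

theorem IsCompact.isCompact_setOf_mapsTo_closedBall {Q : Set F} (hQ : IsCompact Q) :
    IsCompact {w : (F →L[ℝ] F) × F | MapsTo (fun x => w.1 x + w.2) (closedBall 0 1) Q} := by
  obtain ⟨R, hR0, hQR⟩ := hQ.isBounded.subset_closedBall_lt 0 0
  refine Metric.isCompact_of_isClosed_isBounded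
    (hQ.isClosed.setOfPred_mapsTo fun x _ => by fun_prop)
    (isBounded_iff_forall_norm_le.2 ⟨2 * R, fun ⟨L, c⟩ hLc => ?_⟩)
  have hnorm : ∀ x ∈ closedBall (0 : F) 1, ‖L x + c‖ ≤ R := fun x hx =>
    mem_closedBall_zero_iff.1 (hQR (hLc hx))
  have hc : ‖c‖ ≤ R := by simpa using hnorm 0 (mem_closedBall_self zero_le_one)
  refine norm_prod_le_iff.2 ⟨L.opNorm_le_of_unit_norm (by positivity) fun x hx => ?_, by linarith⟩
  calc ‖L x‖ = ‖(L x + c) - c‖ := by rw [add_sub_cancel_right]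
    _ ≤ ‖L x + c‖ + ‖c‖ := norm_sub_le _ _
    _ ≤ 2 * R := by linarith [hnorm x (mem_closedBall_zero_iff.2 hx.le)]

theorem exists_mapsTo_closedBall_det_ne_zero {Q : Set F} (hQ : (interior Q).Nonempty) :
    ∃ L : F →L[ℝ] F, ∃ c : F, MapsTo (fun x => L x + c) (closedBall 0 1) Q ∧ L.det ≠ 0 := by
  obtain ⟨c, hc⟩ := hQ
  obtain ⟨r, hr, hrQ⟩ := nhds_basis_closedBall.mem_iff.1 (mem_interior_iff_mem_nhds.1 hc)
  refine ⟨r • ContinuousLinearMap.id ℝ F, c, fun x hx => hrQ ?_, ?_⟩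
  · rw [mem_closedBall_zero_iff] at hx
    simpa [dist_eq_norm, norm_smul, abs_of_pos hr] using mul_le_mul_of_nonneg_left hx hr.le
  · rw [ContinuousLinearMap.det, ContinuousLinearMap.toLinearMap_smul,
      ContinuousLinearMap.coe_id, LinearMap.det_smul, LinearMap.det_id, mul_one]
    exact pow_ne_zero _ hr.ne'

theorem IsCompact.exists_mapsTo_closedBall_isMaxOn_abs_det {Q : Set F} (hQ : IsCompact Q)
    (hint : (interior Q).Nonempty) :
    ∃ L : F →L[ℝ] F, ∃ c : F, MapsTo (fun x => L x + c) (closedBall 0 1) Q ∧ L.det ≠ 0 ∧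
      ∀ (L' : F →L[ℝ] F) (c' : F), MapsTo (fun x => L' x + c') (closedBall 0 1) Q →
        |L'.det| ≤ |L.det| := by
  obtain ⟨L₀, c₀, hL₀, hdet₀⟩ := exists_mapsTo_closedBall_det_ne_zero hint
  obtain ⟨⟨L, c⟩, hLc, hmax⟩ := hQ.isCompact_setOf_mapsTo_closedBall.exists_isMaxOn
    ⟨(L₀, c₀), hL₀⟩ (ContinuousLinearMap.continuous_det.comp continuous_fst).abs.continuousOn
  refine ⟨L, c, hLc, fun h => ?_, fun L' c' h => hmax (a := (L', c')) h⟩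
  have := hmax (a := (L₀, c₀)) hL₀
  simp [h, hdet₀] at this

end MaximalEllipsoid

section InnerProductSpace

variable {E : Type*} [NormedAddCommGroup E] [InnerProductSpace ℝ E]

def stretchAlong (u : E) (a b : ℝ) : E →L[ℝ] E :=
  b • ContinuousLinearMap.id ℝ E + (a - b) • (innerSL ℝ u).smulRight u

theorem stretchAlong_apply (u : E) (a b : ℝ) (x : E) :
    stretchAlong u a b x = b • x + ((a - b) * ⟪u, x⟫_ℝ) • u := by
  simp [stretchAlong, mul_smul]

theorem det_stretchAlong [FiniteDimensional ℝ E] {u : E} (hu : ‖u‖ = 1) (a b : ℝ) :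
    (stretchAlong u a b).det = a * b ^ (finrank ℝ E - 1) := by
  classical
  have hunit : Orthonormal ℝ ((↑) : ({u} : Set E) → E) :=
    orthonormal_subsingleton_iff.2 fun i => by rw [Set.mem_singleton_iff.1 i.2, hu]
  obtain ⟨s, B, hus, hB⟩ := hunit.exists_orthonormalBasis_extension
  set i₀ : s := ⟨u, hus rfl⟩
  have hdiag : ∀ i, stretchAlong u a b (B i) = (if i = i₀ then a else b) • B i := by
    intro i
    rw [stretchAlong_apply, hB]
    split_ifs with h
    · rw [h, real_inner_self_eq_norm_sq, hu]; module
    · have horth := B.orthonormal.2 (Ne.symm h)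
      rw [hB] at horth
      rw [horth]; module
  have hmat : LinearMap.toMatrix B.toBasis B.toBasis (stretchAlong u a b : E →ₗ[ℝ] E)
      = Matrix.diagonal fun i => if i = i₀ then a else b := by
    ext i j
    rw [LinearMap.toMatrix_apply, OrthonormalBasis.coe_toBasis, ContinuousLinearMap.coe_coe,
      hdiag j, ← OrthonormalBasis.coe_toBasis, map_smul, Module.Basis.repr_self,
      Finsupp.smul_apply, Finsupp.single_apply, Matrix.diagonal_apply]
    rcases eq_or_ne i j with rfl | hij
    · simp
    · simp [hij, Ne.symm hij]
  rw [ContinuousLinearMap.det, ← LinearMap.det_toMatrix B.toBasis, hmat, Matrix.det_diagonal,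
    ← Finset.mul_prod_erase _ _ (Finset.mem_univ i₀), if_pos rfl,
    Finset.prod_congr rfl fun j hj => if_neg (Finset.ne_of_mem_erase hj), Finset.prod_const,
    Finset.card_erase_of_mem (Finset.mem_univ _), Finset.card_univ,
    finrank_eq_card_basis B.toBasis]

theorem norm_smul_add_sq {u w : E} (hu : ‖u‖ = 1) (huw : ⟪u, w⟫_ℝ = 0) (ξ : ℝ) :
    ‖ξ • u + w‖ ^ 2 = ξ ^ 2 + ‖w‖ ^ 2 := by
  rw [norm_add_sq_real, real_inner_smul_left, huw, norm_smul, hu, Real.norm_eq_abs]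
  ring_nf; simp

variable {K : Set E}

theorem Convex.smul_add_mem_of_mem_cone (hK : Convex ℝ K) (hB : closedBall 0 1 ⊆ K) {u w : E}
    (hu : ‖u‖ = 1) (huw : ⟪u, w⟫_ℝ = 0) {s V ξ : ℝ} (hs : 1 < s) (hpK : s • u ∈ K)
    (hV : 0 ≤ V) (hV2 : V ^ 2 = s ^ 2 - 1) (hξ : 1 ≤ s * ξ) (hξs : ξ < s)
    (hcone : ξ + V * ‖w‖ ≤ s) : ξ • u + w ∈ K := by
  have hs2 : 0 < s ^ 2 - 1 := by nlinarith
  have hsξ : 0 < s - ξ := by linarith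
  -- The ray from `s • u` through `ξ • u + w` meets the hyperplane `⟪u, ·⟫ = 1 / s`, along which
  -- the cone touches the unit ball, at this point; `hcone` puts it in the ball.
  have hz : (1 / s) • u + ((s ^ 2 - 1) / (s * (s - ξ))) • w ∈ K := by
    apply hB
    have hVw : (V * ‖w‖) ^ 2 ≤ (s - ξ) ^ 2 := pow_le_pow_left₀ (by positivity) (by linarith) 2
    have hnorm : (1 / s) ^ 2 + ((s ^ 2 - 1) / (s * (s - ξ))) ^ 2 * ‖w‖ ^ 2
        = 1 - (s ^ 2 - 1) * ((s - ξ) ^ 2 - (V * ‖w‖) ^ 2) / (s ^ 2 * (s - ξ) ^ 2) := by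
      rw [mul_pow, hV2]; field_simp; ring
    rw [mem_closedBall_zero_iff, ← sq_le_one_iff₀ (norm_nonneg _),
      norm_smul_add_sq hu (by rw [inner_smul_right, huw, mul_zero]), norm_smul, mul_pow,
      Real.norm_eq_abs, sq_abs, hnorm, sub_le_self_iff]
    exact div_nonneg (mul_nonneg hs2.le (sub_nonneg.2 hVw)) (by positivity)
  have ht : 0 ≤ (s * ξ - 1) / (s ^ 2 - 1) := div_nonneg (by linarith) hs2.le
  have ht' : 0 ≤ 1 - (s * ξ - 1) / (s ^ 2 - 1) := by
    rw [sub_nonneg, div_le_one hs2]; nlinarith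
  convert hK hpK hz ht ht' (add_sub_cancel _ 1) using 1
  match_scalars <;> field_simp <;> ring

theorem Convex.stretchAlong_add_smul_mem (hK : Convex ℝ K) (hB : closedBall 0 1 ⊆ K) {u : E}
    (hu : ‖u‖ = 1) {s ε b : ℝ} (hpK : s • u ∈ K) (hε : 0 < ε) (h4ε : 4 * ε ≤ s - 1)
    (hb : b ^ 2 * (s - 1) = s - 1 - 2 * ε) {x : E} (hx : ‖x‖ ≤ 1) :
    stretchAlong u (1 + ε) b x + ε • u ∈ K := by
  set ζ := ⟪u, x⟫_ℝ
  have hxu : ⟪u, x - ζ • u⟫_ℝ = 0 := by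
    rw [inner_sub_right, real_inner_smul_right, real_inner_self_eq_norm_sq, hu]; ring
  set w := b • (x - ζ • u)
  have huw : ⟪u, w⟫_ℝ = 0 := by rw [inner_smul_right, hxu, mul_zero]
  have hζη : b ^ 2 * ζ ^ 2 + ‖w‖ ^ 2 ≤ b ^ 2 := by
    have hx2 := norm_smul_add_sq hu hxu ζ
    rw [add_sub_cancel] at hx2
    rw [norm_smul, mul_pow, Real.norm_eq_abs, sq_abs, ← mul_add, ← hx2]
    exact mul_le_of_le_one_right (sq_nonneg b) (pow_le_one₀ (norm_nonneg x) hx)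
  have hdecomp : stretchAlong u (1 + ε) b x + ε • u = ((1 + ε) * ζ + ε) • u + w := by
    rw [stretchAlong_apply]; module
  rw [hdecomp]
  by_cases hcap : s * ((1 + ε) * ζ + ε) ≤ 1
  · apply hB
    rw [mem_closedBall_zero_iff, ← sq_le_one_iff₀ (norm_nonneg _), norm_smul_add_sq hu huw]
    exact sq_add_sq_le_one_of_ellipsoid_cap hε h4ε hb hζη hcap
  · have hs2 : 0 ≤ s ^ 2 - 1 := by nlinarith
    have hζ1 : ζ ≤ 1 := (real_inner_le_norm u x).trans (by rw [hu, one_mul]; exact hx)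
    exact hK.smul_add_mem_of_mem_cone hB hu huw (by linarith) hpK (Real.sqrt_nonneg _)
      (Real.sq_sqrt hs2) (not_le.1 hcap).le (by nlinarith)
      (by simpa only [add_assoc] using add_mul_le_of_ellipsoid hε h4ε hb hζη (Real.sq_sqrt hs2))

theorem Convex.exists_one_lt_abs_det_of_finrank_lt_norm [FiniteDimensional ℝ E]
    (hK : Convex ℝ K) (hB : closedBall 0 1 ⊆ K) {p : E} (hp : p ∈ K)
    (hpn : (finrank ℝ E : ℝ) < ‖p‖) :
    ∃ L : E →L[ℝ] E, ∃ c : E, MapsTo (fun x => L x + c) (closedBall 0 1) K ∧ 1 < |L.det| := by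
  set s := ‖p‖
  have hs0 : 0 < s := (Nat.cast_nonneg _).trans_lt hpn
  have : Nontrivial E := nontrivial_of_ne p 0 (norm_pos_iff.1 hs0)
  have hm : ((finrank ℝ E - 1 : ℕ) : ℝ) + 1 < s := by
    rwa [Nat.cast_pred finrank_pos, sub_add_cancel]
  obtain ⟨ε, b, hε, h4ε, hb, hdet⟩ := exists_stretch_params hm
  set u := s⁻¹ • p
  have hu : ‖u‖ = 1 := by rw [norm_smul, norm_inv, norm_norm, inv_mul_cancel₀ hs0.ne']
  have hpu : s • u = p := smul_inv_smul₀ hs0.ne' p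
  refine ⟨stretchAlong u (1 + ε) b, ε • u, fun x hx =>
    hK.stretchAlong_add_smul_mem hB hu (hpu ▸ hp) hε h4ε hb (mem_closedBall_zero_iff.1 hx), ?_⟩
  rwa [det_stretchAlong hu, abs_of_pos (zero_lt_one.trans hdet)]

theorem exists_affineEquiv_closedBall_subset_image_subset [FiniteDimensional ℝ E] {Q : Set E}
    (hQ : IsCompact Q) (hconv : Convex ℝ Q) (hint : (interior Q).Nonempty) :
    ∃ φ : E ≃ᵃ[ℝ] E, closedBall 0 1 ⊆ φ '' Q ∧ φ '' Q ⊆ closedBall 0 (finrank ℝ E) := by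
  obtain ⟨L, c, hLc, hdet, hmax⟩ := hQ.exists_mapsTo_closedBall_isMaxOn_abs_det hint
  let A : E ≃ᵃ[ℝ] E :=
    (LinearMap.equivOfDetNeZero _ hdet).toAffineEquiv.trans (AffineEquiv.constVAdd ℝ E c)
  have hA : ∀ x, A x = L x + c := fun x => add_comm _ _
  have hBA : closedBall 0 1 ⊆ A ⁻¹' Q := fun x hx => by simpa [hA] using hLc hx
  refine ⟨A.symm, by rwa [A.image_symm], ?_⟩
  rw [A.image_symm]
  intro p hp
  by_contra hpn
  rw [mem_closedBall_zero_iff, not_le] at hpn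
  obtain ⟨L', c', hL'c', hdet'⟩ :=
    (hconv.affine_preimage A.toAffineMap).exists_one_lt_abs_det_of_finrank_lt_norm hBA hp hpn
  have hle := hmax (L.comp L') (L c' + c) fun x hx => by simpa [hA, add_assoc] using hL'c' hx
  rw [ContinuousLinearMap.det, ContinuousLinearMap.toLinearMap_comp, LinearMap.det_comp,
    abs_mul] at hle
  exact hle.not_gt (lt_mul_of_one_lt_right (abs_pos.2 hdet) hdet')

end InnerProductSpace

theorem statement4 (n : ℕ) (Q : Set (EuclideanSpace ℝ (Fin n)))
    (hcomp : IsCompact Q) (hconv : Convex ℝ Q) (hint : (interior Q).Nonempty) :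
    ∃ φ : EuclideanSpace ℝ (Fin n) ≃ᵃ[ℝ] EuclideanSpace ℝ (Fin n),
      Metric.closedBall 0 1 ⊆ ⇑φ '' Q ∧ ⇑φ '' Q ⊆ Metric.closedBall 0 n := by
  simpa only [finrank_euclideanSpace_fin] using
    exists_affineEquiv_closedBall_subset_image_subset hcomp hconv hint
end
end

section
/- Let k = ℓ·m, let A, A' : ℝ^n → Sym_k(ℝ) be linear maps, φ, φ' : ℝ^n → ℝ^d linear maps and t, t' ∈ ℝ^d. Suppose the spectrahedra Q = {x ∈ ℝ^n : A(x) + I positive semidefinite} and Q' = {x ∈ ℝ^n : A'(x) + I positive semidefinite} both satisfy B^n ⊆ Q ⊆ n·B^n and B^n ⊆ Q' ⊆ n·B^n, and that the compact sets P = φ(Q) + t and P' = φ'(Q') + t' are both contained in ρ·B^d for some ρ > 0. Then dist(P, P') ≤ ρ·n²·‖A − A'‖ + n·‖φ − φ'‖ + ‖t − t'‖. -/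
open Metric Set

noncomputable section

/-! If `x ∈ Q` and `ε = ‖A - A'‖`, then `A' x + (1 + n ε) I` is the sum of the positive
semidefinite matrices `A x + I` and `(A' - A) x + n ε I`, so `x / (1 + n ε) ∈ Q'`. Since
`φ x + t` and `t = φ 0 + t` both lie in `ρ B^d`, we have `‖φ x‖ ≤ 2ρ`, and the image of
`x / (1 + n ε)` lies within `2ρ n ε + n ‖φ - φ'‖ + ‖t - t'‖ ≤ ρ n² ε + n ‖φ - φ'‖ + ‖t - t'‖`
of `φ x + t` once `n ≥ 2`; for `n ≤ 1` already `Q ⊆ B^n ⊆ Q'`. Exchanging the roles of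
`Q` and `Q'` bounds the Hausdorff distance. -/

-- For the L2 operator norm on matrices, `specNorm T` unfolds to `‖T‖`.
open scoped Matrix.Norms.L2Operator RealInnerProductSpace

section Matrix

variable {ι : Type*} [Fintype ι] [DecidableEq ι]

lemma norm_toEuclideanLin_apply_le (T : Matrix ι ι ℝ) (x : EuclideanSpace ℝ ι) :
    ‖T.toEuclideanLin x‖ ≤ ‖T‖ * ‖x‖ :=
  (Matrix.toEuclideanLin.trans LinearMap.toContinuousLinearMap T).le_opNorm x

lemma posSemidef_add_smul_one {T : Matrix ι ι ℝ} (hT : T.IsHermitian) {c : ℝ} (hc : ‖T‖ ≤ c) :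
    (T + c • 1).PosSemidef := by
  rw [← Matrix.isPositive_toEuclideanLin_iff]
  refine ⟨Matrix.isSymmetric_toEuclideanLin_iff.mpr
    (hT.add (Matrix.isHermitian_one.smul (IsSelfAdjoint.all c))), fun x => ?_⟩
  have hCS : |⟪T.toEuclideanLin x, x⟫| ≤ ‖T‖ * ‖x‖ ^ 2 :=
    calc _ ≤ ‖T.toEuclideanLin x‖ * ‖x‖ := abs_real_inner_le_norm _ _
      _ ≤ ‖T‖ * ‖x‖ * ‖x‖ := by gcongr; exact norm_toEuclideanLin_apply_le T x
      _ = ‖T‖ * ‖x‖ ^ 2 := by ring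
  have hexpand :
      ⟪(T + c • 1).toEuclideanLin x, x⟫ = ⟪T.toEuclideanLin x, x⟫ + c * ‖x‖ ^ 2 := by
    simp [inner_add_left, inner_smul_left]
  rw [RCLike.re_to_real, hexpand]
  linarith [neg_abs_le ⟪T.toEuclideanLin x, x⟫, mul_le_mul_of_nonneg_right hc (sq_nonneg ‖x‖)]

lemma posSemidef_inv_one_add_smul_add_one {M M' : Matrix ι ι ℝ} (hM : (M + 1).PosSemidef)
    (hM' : M'.IsHermitian) {δ : ℝ} (hδ : ‖M' - M‖ ≤ δ) :
    ((1 + δ)⁻¹ • M' + 1).PosSemidef := by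
  have hδ0 : 0 ≤ δ := (norm_nonneg _).trans hδ
  have hMherm : M.IsHermitian := by simpa using hM.isHermitian.sub Matrix.isHermitian_one
  have hsum : (M' + (1 + δ) • 1).PosSemidef := by
    rw [show M' + (1 + δ) • (1 : Matrix ι ι ℝ) = (M + 1) + ((M' - M) + δ • 1) by module]
    exact hM.add (posSemidef_add_smul_one (hM'.sub hMherm) hδ)
  rw [← inv_smul_smul₀ (by positivity : (1 + δ) ≠ 0) (1 : Matrix ι ι ℝ), ← smul_add]
  exact hsum.smul (by positivity)

end Matrix

section Spectrahedron

variable {ι : Type*} [DecidableEq ι] {E F : Type*}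

def spectrahedron [AddCommGroup E] [Module ℝ E] (A : E →ₗ[ℝ] Matrix ι ι ℝ) : Set E :=
  {x | (A x + 1).PosSemidef}

lemma zero_mem_spectrahedron [AddCommGroup E] [Module ℝ E] (A : E →ₗ[ℝ] Matrix ι ι ℝ) :
    0 ∈ spectrahedron A := by
  simpa [spectrahedron] using Matrix.PosSemidef.one

variable [Fintype ι]

lemma inv_one_add_smul_mem_spectrahedron [AddCommGroup E] [Module ℝ E]
    {A A' : E →ₗ[ℝ] Matrix ι ι ℝ} {x : E} (hx : x ∈ spectrahedron A) (hA' : (A' x).IsHermitian)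
    {δ : ℝ} (hδ : ‖A' x - A x‖ ≤ δ) : (1 + δ)⁻¹ • x ∈ spectrahedron A' := by
  simpa [spectrahedron] using posSemidef_inv_one_add_smul_add_one hx hA' hδ

variable [NormedAddCommGroup E] [NormedSpace ℝ E] [NormedAddCommGroup F] [NormedSpace ℝ F]

lemma exists_smul_mem_spectrahedron {A A' : E →ₗ[ℝ] Matrix ι ι ℝ} {n : ℕ} {ε : ℝ} (hε : 0 ≤ ε)
    (hA : ∀ x, ‖A' x - A x‖ ≤ ε * ‖x‖) (hball : closedBall 0 1 ⊆ spectrahedron A')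
    {x : E} (hx : x ∈ spectrahedron A) (hA' : (A' x).IsHermitian) (hxn : ‖x‖ ≤ n) :
    ∃ s : ℝ, 0 ≤ s ∧ s ≤ 1 ∧ s • x ∈ spectrahedron A' ∧ 2 * (1 - s) ≤ n ^ 2 * ε := by
  rcases le_or_gt n 1 with hn | hn
  · refine ⟨1, zero_le_one, le_rfl, ?_, by rw [sub_self, mul_zero]; positivity⟩
    rw [one_smul]
    exact hball (mem_closedBall_zero_iff.mpr (hxn.trans (by exact_mod_cast hn)))
  · have hn2 : (2 : ℝ) ≤ n := by exact_mod_cast hn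
    have hδ : ‖A' x - A x‖ ≤ n * ε := by
      calc _ ≤ ε * ‖x‖ := hA x
        _ ≤ ε * n := by gcongr
        _ = n * ε := mul_comm _ _
    set s := (1 + n * ε)⁻¹
    have hs0 : 0 < s := by positivity
    have hs1 : s ≤ 1 := inv_le_one_of_one_le₀ (by nlinarith)
    refine ⟨s, hs0.le, hs1, inv_one_add_smul_mem_spectrahedron hx hA' hδ, ?_⟩
    calc 2 * (1 - s) = 2 * (n * ε * s) := by simp only [s]; field_simp; ring
      _ ≤ 2 * (n * ε) :=
          mul_le_mul_of_nonneg_left (mul_le_of_le_one_right (by positivity) hs1) zero_le_two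
      _ ≤ n ^ 2 * ε := by nlinarith [mul_nonneg (mul_nonneg n.cast_nonneg hε) (sub_nonneg.2 hn2)]

lemma norm_add_sub_smul_add_le (φ φ' : E →ₗ[ℝ] F) (t t' : F) (x : E) {s : ℝ} (hs0 : 0 ≤ s)
    (hs1 : s ≤ 1) :
    ‖(φ x + t) - (φ' (s • x) + t')‖ ≤ (1 - s) * ‖φ x‖ + ‖φ x - φ' x‖ + ‖t - t'‖ := by
  have hdecomp :
      (φ x + t) - (φ' (s • x) + t') = (1 - s) • φ x + s • (φ x - φ' x) + (t - t') := by
    rw [map_smul]; module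
  have hsmul : ‖s • (φ x - φ' x)‖ ≤ ‖φ x - φ' x‖ := by
    rw [norm_smul, Real.norm_of_nonneg hs0]
    exact mul_le_of_le_one_left (norm_nonneg _) hs1
  calc _ ≤ ‖(1 - s) • φ x‖ + ‖s • (φ x - φ' x)‖ + ‖t - t'‖ := hdecomp ▸ norm_add₃_le
    _ ≤ _ := by rw [norm_smul, Real.norm_of_nonneg (by linarith)]; gcongr

lemma exists_dist_le_of_mem_image_spectrahedron {A A' : E →ₗ[ℝ] Matrix ι ι ℝ}
    (hA' : ∀ x, (A' x).IsHermitian) {φ φ' : E →ₗ[ℝ] F} {t t' : F} {n : ℕ} {ρ ε η : ℝ}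
    (hε : 0 ≤ ε) (hη : 0 ≤ η) (hA : ∀ x, ‖A' x - A x‖ ≤ ε * ‖x‖)
    (hφ : ∀ x, ‖φ x - φ' x‖ ≤ η * ‖x‖) (hQ : spectrahedron A ⊆ closedBall 0 n)
    (hball : closedBall 0 1 ⊆ spectrahedron A')
    (hP : (fun x => φ x + t) '' spectrahedron A ⊆ closedBall 0 ρ) :
    ∀ p ∈ (fun x => φ x + t) '' spectrahedron A,
      ∃ p' ∈ (fun x => φ' x + t') '' spectrahedron A',
        dist p p' ≤ ρ * n ^ 2 * ε + n * η + ‖t - t'‖ := by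
  rintro _ ⟨x, hx, rfl⟩
  have hxn : ‖x‖ ≤ n := mem_closedBall_zero_iff.mp (hQ hx)
  have hφx : ‖φ x‖ ≤ 2 * ρ := by
    have hp := mem_closedBall_zero_iff.mp (hP ⟨x, hx, rfl⟩)
    have ht := mem_closedBall_zero_iff.mp (hP ⟨0, zero_mem_spectrahedron A, rfl⟩)
    simp only [map_zero, zero_add] at hp ht
    calc ‖φ x‖ = ‖(φ x + t) - t‖ := by rw [add_sub_cancel_right]
      _ ≤ ‖φ x + t‖ + ‖t‖ := norm_sub_le _ _
      _ ≤ 2 * ρ := by linarith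
  obtain ⟨s, hs0, hs1, hsx, hs⟩ := exists_smul_mem_spectrahedron hε hA hball hx (hA' x) hxn
  refine ⟨_, ⟨s • x, hsx, rfl⟩, ?_⟩
  calc dist (φ x + t) (φ' (s • x) + t')
      ≤ (1 - s) * ‖φ x‖ + ‖φ x - φ' x‖ + ‖t - t'‖ :=
        (dist_eq_norm _ _).trans_le (norm_add_sub_smul_add_le φ φ' t t' x hs0 hs1)
    _ ≤ (1 - s) * (2 * ρ) + η * n + ‖t - t'‖ := by
        gcongr
        exact (hφ x).trans (mul_le_mul_of_nonneg_left hxn hη)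
    _ ≤ ρ * n ^ 2 * ε + n * η + ‖t - t'‖ := by
        nlinarith [mul_le_mul_of_nonneg_left hs ((norm_nonneg _).trans hφx)]

end Spectrahedron

lemma lmNorm_eq_norm {n : ℕ} {ι : Type*} [Fintype ι] [DecidableEq ι]
    (A : EuclideanSpace ℝ (Fin n) →ₗ[ℝ] Matrix ι ι ℝ) :
    lmNorm A = ‖LinearMap.toContinuousLinearMap A‖ := by
  rw [← ContinuousLinearMap.sSup_unitClosedBall_eq_norm, lmNorm]
  congr
  ext r
  simp only [mem_closedBall_zero_iff, eq_comm]
  rfl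

theorem statement8_general (n d l m : ℕ)
    (A A' : EuclideanSpace ℝ (Fin n) →ₗ[ℝ] Matrix (Fin m × Fin l) (Fin m × Fin l) ℝ)
    (hsymm : ∀ x, (A x).IsSymm) (hsymm' : ∀ x, (A' x).IsSymm)
    (φ φ' : EuclideanSpace ℝ (Fin n) →ₗ[ℝ] EuclideanSpace ℝ (Fin d))
    (t t' : EuclideanSpace ℝ (Fin d)) (ρ : ℝ)
    (hQ1 : Metric.closedBall (0 : EuclideanSpace ℝ (Fin n)) 1 ⊆ {x | (A x + 1).PosSemidef})
    (hQ2 : {x : EuclideanSpace ℝ (Fin n) | (A x + 1).PosSemidef} ⊆ Metric.closedBall 0 n)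
    (hQ1' : Metric.closedBall (0 : EuclideanSpace ℝ (Fin n)) 1 ⊆ {x | (A' x + 1).PosSemidef})
    (hQ2' : {x : EuclideanSpace ℝ (Fin n) | (A' x + 1).PosSemidef} ⊆ Metric.closedBall 0 n)
    (hPρ : (fun x => φ x + t) '' {x | (A x + 1).PosSemidef} ⊆ Metric.closedBall 0 ρ)
    (hPρ' : (fun x => φ' x + t') '' {x | (A' x + 1).PosSemidef} ⊆ Metric.closedBall 0 ρ) :
    Metric.hausdorffDist
        ((fun x => φ x + t) '' {x | (A x + 1).PosSemidef})
        ((fun x => φ' x + t') '' {x | (A' x + 1).PosSemidef})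
      ≤ ρ * n ^ 2 * lmNorm (A - A') + n * ‖LinearMap.toContinuousLinearMap (φ - φ')‖
          + ‖t - t'‖ := by
  rw [lmNorm_eq_norm]
  have hA (x) : ‖A x - A' x‖ ≤ ‖LinearMap.toContinuousLinearMap (A - A')‖ * ‖x‖ :=
    (LinearMap.toContinuousLinearMap (A - A')).le_opNorm x
  have hφ (x) : ‖φ x - φ' x‖ ≤ ‖LinearMap.toContinuousLinearMap (φ - φ')‖ * ‖x‖ :=
    (LinearMap.toContinuousLinearMap (φ - φ')).le_opNorm x
  have hε := norm_nonneg (LinearMap.toContinuousLinearMap (A - A'))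
  have hη := norm_nonneg (LinearMap.toContinuousLinearMap (φ - φ'))
  have hPP' := exists_dist_le_of_mem_image_spectrahedron (t' := t')
    (fun x => Matrix.isHermitian_iff_isSymm.mpr (hsymm' x)) hε hη
    (fun x => (norm_sub_rev _ _).trans_le (hA x)) hφ hQ2 hQ1' hPρ
  have hP'P := exists_dist_le_of_mem_image_spectrahedron (t' := t)
    (fun x => Matrix.isHermitian_iff_isSymm.mpr (hsymm x)) hε hη hA
    (fun x => (norm_sub_rev _ _).trans_le (hφ x)) hQ2' hQ1 hPρ'
  rw [norm_sub_rev t'] at hP'P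
  obtain ⟨p', -, hp'⟩ := hPP' _ ⟨0, zero_mem_spectrahedron A, rfl⟩
  exact hausdorffDist_le_of_mem_dist (dist_nonneg.trans hp') hPP' hP'P

theorem statement8 (n d l m : ℕ)
    (A A' : EuclideanSpace ℝ (Fin n) →ₗ[ℝ] Matrix (Fin m × Fin l) (Fin m × Fin l) ℝ)
    (hsymm : ∀ x, (A x).IsSymm) (hsymm' : ∀ x, (A' x).IsSymm)
    (hblock : ∀ x, ∃ f : Fin l → Matrix (Fin m) (Fin m) ℝ, A x = Matrix.blockDiagonal f)
    (hblock' : ∀ x, ∃ f : Fin l → Matrix (Fin m) (Fin m) ℝ, A' x = Matrix.blockDiagonal f)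
    (φ φ' : EuclideanSpace ℝ (Fin n) →ₗ[ℝ] EuclideanSpace ℝ (Fin d))
    (t t' : EuclideanSpace ℝ (Fin d)) (ρ : ℝ) (hρ : 0 < ρ)
    (hQ1 : Metric.closedBall (0 : EuclideanSpace ℝ (Fin n)) 1 ⊆ {x | (A x + 1).PosSemidef})
    (hQ2 : {x : EuclideanSpace ℝ (Fin n) | (A x + 1).PosSemidef} ⊆ Metric.closedBall 0 n)
    (hQ1' : Metric.closedBall (0 : EuclideanSpace ℝ (Fin n)) 1 ⊆ {x | (A' x + 1).PosSemidef})
    (hQ2' : {x : EuclideanSpace ℝ (Fin n) | (A' x + 1).PosSemidef} ⊆ Metric.closedBall 0 n)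
    (hPρ : (fun x => φ x + t) '' {x | (A x + 1).PosSemidef} ⊆ Metric.closedBall 0 ρ)
    (hPρ' : (fun x => φ' x + t') '' {x | (A' x + 1).PosSemidef} ⊆ Metric.closedBall 0 ρ) :
    Metric.hausdorffDist
        ((fun x => φ x + t) '' {x | (A x + 1).PosSemidef})
        ((fun x => φ' x + t') '' {x | (A' x + 1).PosSemidef})
      ≤ ρ * n ^ 2 * lmNorm (A - A') + n * ‖LinearMap.toContinuousLinearMap (φ - φ')‖
          + ‖t - t'‖ :=
  statement8_general n d l m A A' hsymm hsymm' φ φ' t t' ρ hQ1 hQ2 hQ1' hQ2' hPρ hPρ'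
end
end

section
/- Let A, A' : ℝ^n → Sym_k(ℝ) be linear maps and let x ∈ ℝ^n with ‖x‖ ≤ n be such that A(x) + I is positive semidefinite. Set λ := 1/(1 + n·‖A − A'‖). Then A'(λx) + I is positive semidefinite. -/
open Metric Set

noncomputable section

/-! Write `S := (A - A') x`, so that `A' (λ • x) + I = λ • (A x + I) + ((1 - λ) • I - λ • S)`.
The first summand is positive semidefinite by hypothesis, and the second because
`‖λ • S‖ ≤ λ n ‖A - A'‖ = 1 - λ`: a symmetric matrix of spectral norm at most `c` lies below `c • I`. -/

open Matrix

section SpectralNorm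

variable {ι : Type*} [Fintype ι] [DecidableEq ι]

lemma specNorm_nonneg (T : Matrix ι ι ℝ) : 0 ≤ specNorm T := norm_nonneg _

lemma specNorm_smul (c : ℝ) (T : Matrix ι ι ℝ) : specNorm (c • T) = |c| * specNorm T := by
  simp only [specNorm, map_smul, norm_smul, Real.norm_eq_abs]

lemma dotProduct_mulVec_le_specNorm_mul (T : Matrix ι ι ℝ) (v : ι → ℝ) :
    v ⬝ᵥ (T *ᵥ v) ≤ specNorm T * (v ⬝ᵥ v) := by
  set w : EuclideanSpace ℝ ι := WithLp.toLp 2 v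
  have hquad : v ⬝ᵥ (T *ᵥ v) = inner ℝ w (toEuclideanLin T w) := by
    simp [w, toLpLin_toLp, EuclideanSpace.inner_toLp_toLp, dotProduct_comm]
  have hsq : v ⬝ᵥ v = ‖w‖ ^ 2 := by
    rw [← real_inner_self_eq_norm_sq, EuclideanSpace.inner_toLp_toLp, star_trivial]
  rw [hquad, hsq]
  calc inner ℝ w (toEuclideanLin T w)
      ≤ ‖w‖ * ‖toEuclideanLin T w‖ := real_inner_le_norm _ _
    _ ≤ ‖w‖ * (specNorm T * ‖w‖) := by
      gcongr
      exact (LinearMap.toContinuousLinearMap (toEuclideanLin T)).le_opNorm w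
    _ = specNorm T * ‖w‖ ^ 2 := by ring

lemma posSemidef_smul_one_sub_of_specNorm_le {E : Matrix ι ι ℝ} (hE : E.IsHermitian) {c : ℝ}
    (hc : specNorm E ≤ c) : (c • 1 - E).PosSemidef := by
  refine .of_dotProduct_mulVec_nonneg ((isHermitian_one.smul (.all c)).sub hE) fun v ↦ ?_
  have hvv : 0 ≤ v ⬝ᵥ v := Finset.sum_nonneg fun i _ ↦ mul_self_nonneg (v i)
  simp only [star_trivial, sub_mulVec, smul_mulVec, one_mulVec,
    dotProduct_sub, dotProduct_smul, smul_eq_mul]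
  linarith [dotProduct_mulVec_le_specNorm_mul E v, mul_le_mul_of_nonneg_right hc hvv]

end SpectralNorm

section LinearMapNorm

variable {n : ℕ} {ι : Type*} [Fintype ι] [DecidableEq ι]
  (B : EuclideanSpace ℝ (Fin n) →ₗ[ℝ] Matrix ι ι ℝ)

lemma continuous_specNorm_apply : Continuous fun x ↦ specNorm (B x) :=
  continuous_norm.comp (LinearMap.toContinuousLinearMap.toLinearMap ∘ₗ
    toEuclideanLin.toLinearMap ∘ₗ B).continuous_of_finiteDimensional

lemma lmNorm_eq_sSup_image_closedBall :
    lmNorm B = sSup ((fun x ↦ specNorm (B x)) '' closedBall 0 1) := by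
  unfold lmNorm
  congr 1
  ext r
  simp [eq_comm]

lemma specNorm_le_lmNorm {x : EuclideanSpace ℝ (Fin n)} (hx : ‖x‖ ≤ 1) :
    specNorm (B x) ≤ lmNorm B := by
  rw [lmNorm_eq_sSup_image_closedBall]
  exact le_csSup
    ((isCompact_closedBall 0 1).bddAbove_image (continuous_specNorm_apply B).continuousOn)
    (mem_image_of_mem _ (mem_closedBall_zero_iff.mpr hx))

lemma lmNorm_nonneg : 0 ≤ lmNorm B :=
  (specNorm_nonneg _).trans (specNorm_le_lmNorm B (x := 0) (by simp))

lemma specNorm_apply_le_lmNorm_mul (x : EuclideanSpace ℝ (Fin n)) :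
    specNorm (B x) ≤ lmNorm B * ‖x‖ := by
  rcases eq_or_ne x 0 with rfl | hx
  · simp [specNorm]
  have hx' : 0 < ‖x‖ := norm_pos_iff.mpr hx
  have hunit := specNorm_le_lmNorm B (x := ‖x‖⁻¹ • x) (by simp [norm_smul, hx'.ne'])
  rwa [map_smul, specNorm_smul, abs_inv, abs_norm, inv_mul_le_iff₀ hx', mul_comm] at hunit

end LinearMapNorm

theorem statement9_general (n k : ℕ)
    (A A' : EuclideanSpace ℝ (Fin n) →ₗ[ℝ] Matrix (Fin k) (Fin k) ℝ)
    (hsymm' : ∀ x, (A' x).IsSymm)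
    (x : EuclideanSpace ℝ (Fin n)) (hx : ‖x‖ ≤ n)
    (hpsd : (A x + 1).PosSemidef) :
    (A' ((1 / (1 + n * lmNorm (A - A'))) • x) + 1).PosSemidef := by
  set c := lmNorm (A - A')
  set lam := 1 / (1 + n * c)
  have hc : 0 ≤ c := lmNorm_nonneg _
  have hlam : 0 ≤ lam := by positivity
  have hdefect : lam * (n * c) = 1 - lam := by
    have : lam * (1 + n * c) = 1 := one_div_mul_cancel (by positivity)
    linear_combination this
  set S := (A - A') x
  have hS : S.IsHermitian := by
    have hAx : (A x).IsHermitian := by simpa using hpsd.isHermitian.sub isHermitian_one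
    exact hAx.sub (isHermitian_iff_isSymm.mpr (hsymm' x))
  have hSnorm : specNorm (lam • S) ≤ 1 - lam := by
    rw [specNorm_smul, abs_of_nonneg hlam, ← hdefect]
    gcongr
    calc specNorm S ≤ c * ‖x‖ := specNorm_apply_le_lmNorm_mul _ _
      _ ≤ n * c := by rw [mul_comm]; gcongr
  have hsplit : A' (lam • x) + 1 = lam • (A x + 1) + ((1 - lam) • 1 - lam • S) := by
    simp only [S, map_smul, LinearMap.sub_apply, smul_add, smul_sub, sub_smul, one_smul]
    abel
  rw [hsplit]
  exact (hpsd.smul hlam).add (posSemidef_smul_one_sub_of_specNorm_le (hS.smul (.all lam)) hSnorm)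

theorem statement9 (n k : ℕ)
    (A A' : EuclideanSpace ℝ (Fin n) →ₗ[ℝ] Matrix (Fin k) (Fin k) ℝ)
    (hsymm : ∀ x, (A x).IsSymm) (hsymm' : ∀ x, (A' x).IsSymm)
    (x : EuclideanSpace ℝ (Fin n)) (hx : ‖x‖ ≤ n)
    (hpsd : (A x + 1).PosSemidef) :
    (A' ((1 / (1 + n * lmNorm (A - A'))) • x) + 1).PosSemidef :=
  statement9_general n k A A' hsymm' x hx hpsd
end
end

section
/- Let d ∈ ℕ and let P₁, P₂ ⊆ ℝ^d be two distinct non-empty 0/1-polytopes. Then dist(P₁, P₂) ≥ 1/√d. -/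
open Metric Set

noncomputable section

/-!
The functional `y ↦ ⟪2v - 1, y⟫` attached to a 0/1-vector `v` exceeds its value at any other
0/1-vector `w` by the Hamming distance of `v` and `w`, hence by at least `1`. So if a vertex `v`
of `P₁` lies outside `P₂`, this functional separates `v` from all of `P₂` with a gap of `1`, and
since `‖2v - 1‖ = √d`, Cauchy–Schwarz puts `v` at distance at least `1 / √d` from `P₂`. Two
distinct polytopes always have such a vertex on one side or the other.
-/

open RealInnerProductSpace

lemma exists_mem_notMem_convexHull_of_convexHull_ne {𝕜 E : Type*} [Field 𝕜] [LinearOrder 𝕜]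
    [IsStrictOrderedRing 𝕜] [AddCommGroup E] [Module 𝕜 E] {V W : Set E}
    (h : convexHull 𝕜 V ≠ convexHull 𝕜 W) :
    (∃ v ∈ V, v ∉ convexHull 𝕜 W) ∨ ∃ w ∈ W, w ∉ convexHull 𝕜 V := by
  by_contra! hsub
  exact h <| (convexHull_min hsub.1 (convex_convexHull 𝕜 W)).antisymm
    (convexHull_min hsub.2 (convex_convexHull 𝕜 V))

def zeroOneVectors (d : ℕ) : Set (EuclideanSpace ℝ (Fin d)) :=
  {x | ∀ i, x i = 0 ∨ x i = 1}

def signVector {d : ℕ} (v : EuclideanSpace ℝ (Fin d)) : EuclideanSpace ℝ (Fin d) :=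
  WithLp.toLp 2 fun i => 2 * v i - 1

namespace zeroOneVectors

variable {d : ℕ} {v w y : EuclideanSpace ℝ (Fin d)} {V W : Set (EuclideanSpace ℝ (Fin d))}

lemma norm_le_sqrt (hv : v ∈ zeroOneVectors d) : ‖v‖ ≤ √d := by
  rw [EuclideanSpace.norm_eq]
  refine Real.sqrt_le_sqrt ?_
  calc ∑ i, ‖v i‖ ^ 2 ≤ ∑ _i : Fin d, (1 : ℝ) :=
        Finset.sum_le_sum fun i _ => by rcases hv i with h | h <;> simp [h]
    _ = d := by simp

lemma isBounded : Bornology.IsBounded (zeroOneVectors d) :=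
  (isBounded_closedBall (x := 0) (r := √d)).subset fun _ hv => by
    simpa using norm_le_sqrt hv

lemma norm_signVector (hv : v ∈ zeroOneVectors d) : ‖signVector v‖ = √d := by
  rw [EuclideanSpace.norm_eq]
  congr 1
  calc ∑ i, ‖(signVector v) i‖ ^ 2 = ∑ _i : Fin d, (1 : ℝ) :=
        Finset.sum_congr rfl fun i _ => by rcases hv i with h | h <;> norm_num [signVector, h]
    _ = d := by simp

lemma inner_signVector_sub_eq_card (hv : v ∈ zeroOneVectors d) (hw : w ∈ zeroOneVectors d) :
    ⟪signVector v, v - w⟫ = (Finset.univ.filter fun i => v i ≠ w i).card := by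
  rw [PiLp.inner_apply, ← Finset.sum_boole]
  refine Finset.sum_congr rfl fun i _ => ?_
  rcases hv i with h | h <;> rcases hw i with h' | h' <;> norm_num [signVector, h, h']

lemma one_le_inner_signVector_sub (hv : v ∈ zeroOneVectors d) (hw : w ∈ zeroOneVectors d)
    (hne : w ≠ v) : 1 ≤ ⟪signVector v, v - w⟫ := by
  obtain ⟨i, hi⟩ : ∃ i, v i ≠ w i := by
    by_contra! h
    exact hne (PiLp.ext fun i => (h i).symm)
  rw [inner_signVector_sub_eq_card hv hw, Nat.one_le_cast, Nat.one_le_iff_ne_zero,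
    Finset.card_ne_zero]
  exact ⟨i, Finset.mem_filter.2 ⟨Finset.mem_univ i, hi⟩⟩

lemma one_le_inner_signVector_sub_of_mem_convexHull (hV : V ⊆ zeroOneVectors d)
    (hv : v ∈ zeroOneVectors d) (hvV : v ∉ convexHull ℝ V) (hy : y ∈ convexHull ℝ V) :
    1 ≤ ⟪signVector v, v - y⟫ := by
  have hsep : convexHull ℝ V ⊆ {y | ⟪signVector v, y⟫ ≤ ⟪signVector v, v⟫ - 1} := by
    refine convexHull_min (fun w hw => ?_)
      (convex_halfSpace_le (innerₛₗ ℝ (signVector v)).isLinear _)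
    have := one_le_inner_signVector_sub hv (hV hw) fun h => hvV (h ▸ subset_convexHull ℝ V hw)
    rw [inner_sub_right] at this
    show ⟪signVector v, w⟫ ≤ ⟪signVector v, v⟫ - 1
    linarith
  have hyv : ⟪signVector v, y⟫ ≤ ⟪signVector v, v⟫ - 1 := hsep hy
  rw [inner_sub_right]
  linarith

lemma inv_sqrt_le_dist (hV : V ⊆ zeroOneVectors d) (hv : v ∈ zeroOneVectors d)
    (hvV : v ∉ convexHull ℝ V) (hy : y ∈ convexHull ℝ V) : 1 / √d ≤ dist v y := by
  refine div_le_of_le_mul₀ (Real.sqrt_nonneg _) dist_nonneg ?_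
  calc 1 ≤ ⟪signVector v, v - y⟫ := one_le_inner_signVector_sub_of_mem_convexHull hV hv hvV hy
    _ ≤ ‖signVector v‖ * ‖v - y‖ := real_inner_le_norm _ _
    _ = dist v y * √d := by rw [norm_signVector hv, dist_eq_norm, mul_comm]

lemma inv_sqrt_le_hausdorffDist (hV : V ⊆ zeroOneVectors d) (hW : W ⊆ zeroOneVectors d)
    (hWne : W.Nonempty) (hvV : v ∈ V) (hvW : v ∉ convexHull ℝ W) :
    1 / √d ≤ hausdorffDist (convexHull ℝ V) (convexHull ℝ W) := by
  have hfin : hausdorffEDist (convexHull ℝ V) (convexHull ℝ W) ≠ ⊤ :=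
    hausdorffEDist_ne_top_of_nonempty_of_bounded ⟨v, subset_convexHull ℝ V hvV⟩
      (convexHull_nonempty_iff.2 hWne) (isBounded_convexHull.2 (isBounded.subset hV))
      (isBounded_convexHull.2 (isBounded.subset hW))
  calc 1 / √d ≤ infDist v (convexHull ℝ W) :=
        (le_infDist (convexHull_nonempty_iff.2 hWne)).2 fun _ hy =>
          inv_sqrt_le_dist hW (hV hvV) hvW hy
    _ ≤ hausdorffDist (convexHull ℝ V) (convexHull ℝ W) :=
        infDist_le_hausdorffDist_of_mem (subset_convexHull ℝ V hvV) hfin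

end zeroOneVectors

theorem statement10 (d : ℕ) (P₁ P₂ : Set (EuclideanSpace ℝ (Fin d)))
    (h₁ : IsZeroOnePolytope P₁) (h₂ : IsZeroOnePolytope P₂)
    (hne₁ : P₁.Nonempty) (hne₂ : P₂.Nonempty) (hne : P₁ ≠ P₂) :
    1 / Real.sqrt d ≤ Metric.hausdorffDist P₁ P₂ := by
  obtain ⟨V₁, hV₁, rfl⟩ := h₁
  obtain ⟨V₂, hV₂, rfl⟩ := h₂
  rcases exists_mem_notMem_convexHull_of_convexHull_ne hne with ⟨v, hv, hvP⟩ | ⟨v, hv, hvP⟩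
  · exact zeroOneVectors.inv_sqrt_le_hausdorffDist hV₁ hV₂
      (convexHull_nonempty_iff.1 hne₂) hv hvP
  · rw [hausdorffDist_comm]
    exact zeroOneVectors.inv_sqrt_le_hausdorffDist hV₂ hV₁
      (convexHull_nonempty_iff.1 hne₁) hv hvP
end
end

section
/- Let s ∈ ℕ and for each nonempty I ⊆ [s] := {1,…,s} let P_I := conv({(t, t²) : t ∈ I}) ⊆ ℝ². Then for all nonempty I, J ⊆ [s] with I ≠ J one has dist(P_I, P_J) ≥ 1/(3s). -/
open Metric Set

noncomputable section

open scoped InnerProductSpace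

/-! Pick `t ∈ I \ J`. The functional `z ↦ z₂ - 2t z₁`, normal to the tangent of the parabola
at `(t, t²)`, takes the value `(u - t)² - t²` at `(u, u²)`. Every `u ∈ J` is an integer `≠ t`, so on
`P_J` it exceeds its value at `(t, t²) ∈ P_I` by at least `1`; its norm is at most `1 + 2t ≤ 3s`. -/

theorem Metric.le_hausdorffDist_of_mem_of_forall_le_dist {α : Type*} [PseudoMetricSpace α]
    {s t : Set α} {x : α} {r : ℝ} (hx : x ∈ s) (ht : t.Nonempty)
    (hs_bdd : Bornology.IsBounded s) (ht_bdd : Bornology.IsBounded t)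
    (h : ∀ y ∈ t, r ≤ dist x y) : r ≤ hausdorffDist s t :=
  ((le_infDist ht).2 h).trans <| infDist_le_hausdorffDist_of_mem hx <|
    hausdorffEDist_ne_top_of_nonempty_of_bounded ⟨x, hx⟩ ht hs_bdd ht_bdd

theorem one_le_abs_natCast_sub_natCast {u t : ℕ} (h : u ≠ t) : (1 : ℝ) ≤ |(u : ℝ) - t| := by
  have : (1 : ℤ) ≤ |(u : ℤ) - t| := Int.one_le_abs (sub_ne_zero.2 (by exact_mod_cast h))
  exact_mod_cast this

namespace Parabola

def point (t : ℝ) : EuclideanSpace ℝ (Fin 2) := !₂[t, t ^ 2]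

def normal (t : ℝ) : EuclideanSpace ℝ (Fin 2) := !₂[-2 * t, 1]

theorem inner_normal_point (t u : ℝ) : ⟪normal t, point u⟫_ℝ = (u - t) ^ 2 - t ^ 2 := by
  simp [normal, point, PiLp.inner_apply, Fin.sum_univ_two]
  ring

theorem norm_normal_le (t : ℝ) : ‖normal t‖ ≤ 1 + 2 * |t| := by
  rw [EuclideanSpace.norm_eq, Real.sqrt_le_left (by positivity)]
  simp [normal, Fin.sum_univ_two]
  nlinarith [abs_nonneg t, sq_abs t]

theorem sq_le_inner_normal_sub_point {S : Set ℝ} {t δ : ℝ} (hδ : 0 ≤ δ)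
    (hS : ∀ u ∈ S, δ ≤ |u - t|) {y : EuclideanSpace ℝ (Fin 2)}
    (hy : y ∈ convexHull ℝ (point '' S)) : δ ^ 2 ≤ ⟪normal t, y - point t⟫_ℝ := by
  suffices h : δ ^ 2 - t ^ 2 ≤ ⟪normal t, y⟫_ℝ by
    rw [inner_sub_right, inner_normal_point]; linarith
  refine convexHull_min ?_ (convex_halfSpace_ge (innerₛₗ ℝ (normal t)).isLinear _) hy
  rintro _ ⟨u, hu, rfl⟩
  simp only [mem_ofPred_eq, innerₛₗ_apply_apply, inner_normal_point]
  nlinarith [sq_abs (u - t), hS u hu, abs_nonneg (u - t)]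

theorem sq_le_mul_dist_of_mem_convexHull {S : Set ℝ} {t δ : ℝ} (hδ : 0 ≤ δ)
    (hS : ∀ u ∈ S, δ ≤ |u - t|) {y : EuclideanSpace ℝ (Fin 2)}
    (hy : y ∈ convexHull ℝ (point '' S)) : δ ^ 2 ≤ (1 + 2 * |t|) * dist (point t) y :=
  calc δ ^ 2 ≤ ⟪normal t, y - point t⟫_ℝ := sq_le_inner_normal_sub_point hδ hS hy
    _ ≤ ‖normal t‖ * ‖y - point t‖ := real_inner_le_norm _ _
    _ ≤ (1 + 2 * |t|) * dist (point t) y := by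
      rw [dist_comm, dist_eq_norm]
      exact mul_le_mul_of_nonneg_right (norm_normal_le t) (norm_nonneg _)

theorem one_div_three_mul_le_hausdorffDist_of_mem_of_notMem {s t : ℕ} {I J : Finset ℕ}
    (hI : I ⊆ Finset.Icc 1 s) (hJ : J.Nonempty) (htI : t ∈ I) (htJ : t ∉ J) :
    1 / (3 * (s : ℝ)) ≤ hausdorffDist (convexHull ℝ ((fun u : ℕ => point u) '' I))
      (convexHull ℝ ((fun u : ℕ => point u) '' J)) := by
  obtain ⟨ht1, hts⟩ := Finset.mem_Icc.1 (hI htI)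
  have hs : (0 : ℝ) < s := by exact_mod_cast ht1.trans hts
  have hts' : (t : ℝ) ≤ s := by exact_mod_cast hts
  refine le_hausdorffDist_of_mem_of_forall_le_dist (subset_convexHull ℝ _ ⟨t, htI, rfl⟩)
    ((Finset.coe_nonempty.2 hJ).image _).convexHull
    ((I.finite_toSet.image _).isCompact_convexHull ℝ).isBounded
    ((J.finite_toSet.image _).isCompact_convexHull ℝ).isBounded fun y hy => ?_
  rw [← image_image point Nat.cast] at hy
  have h := sq_le_mul_dist_of_mem_convexHull zero_le_one (t := t)
    (by rintro _ ⟨u, hu, rfl⟩; exact one_le_abs_natCast_sub_natCast (ne_of_mem_of_not_mem hu htJ))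
    hy
  rw [abs_of_nonneg (Nat.cast_nonneg t), one_pow] at h
  have h3s : 1 + 2 * (t : ℝ) ≤ 3 * s := by linarith [(Nat.one_le_cast (α := ℝ)).2 ht1]
  rw [div_le_iff₀ (by positivity), mul_comm]
  exact h.trans (mul_le_mul_of_nonneg_right h3s dist_nonneg)

end Parabola

theorem statement15 (s : ℕ) (I J : Finset ℕ)
    (hI : I ⊆ Finset.Icc 1 s) (hJ : J ⊆ Finset.Icc 1 s)
    (hIne : I.Nonempty) (hJne : J.Nonempty) (hIJ : I ≠ J) :
    1 / (3 * (s : ℝ)) ≤ Metric.hausdorffDist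
      (convexHull ℝ
        ((fun t : ℕ => (EuclideanSpace.equiv (Fin 2) ℝ).symm ![(t : ℝ), (t : ℝ) ^ 2]) '' I))
      (convexHull ℝ
        ((fun t : ℕ => (EuclideanSpace.equiv (Fin 2) ℝ).symm ![(t : ℝ), (t : ℝ) ^ 2]) '' J)) := by
  obtain ⟨t, htI, htJ⟩ | ⟨t, htJ, htI⟩ : (∃ t ∈ I, t ∉ J) ∨ ∃ t ∈ J, t ∉ I := by
    by_contra! h
    exact hIJ (Finset.Subset.antisymm h.1 h.2)
  · exact Parabola.one_div_three_mul_le_hausdorffDist_of_mem_of_notMem hI hJne htI htJ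
  · rw [hausdorffDist_comm]
    exact Parabola.one_div_three_mul_le_hausdorffDist_of_mem_of_notMem hJ hIne htJ htI
end
end

section
/- For every d ∈ ℕ with d ≥ 4 and every 0/1-polytope P in ℝ^d, one has xc(P) ≤ 9·2^d/d. -/
open Metric Set

noncomputable section

/-! Split the coordinates as `ℝ^d = ℝ^k × ℝ^m` and group the 0/1 points `(a, b)` of `V` by the
fiber `S_b = {a | (a, b) ∈ V}`, one of only `2^(2^k)` subsets of `{0,1}^k`. Then `V` is the union of
the products `S × W_S`, where `W_S = {b | S_b = S}`, and `conv V` is the convex hull of the union of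
the polytopes `conv S + conv W_S`. Balas' disjunctive formulation, with the trivial simplex
description of every `conv S` and `conv W_S`, needs at most `2^(2^k) (2^k + 2) + 2^m + 2`
inequalities, since the sets `W_S` partition `{0,1}^m`. Taking `2^k` between `d/8` and `d/4`
makes this at most `9 · 2^d / d`. -/

theorem xc_le_of_hasLinExt {d l : ℕ} {P : Set (EuclideanSpace ℝ (Fin d))} (h : HasLinExt P l) :
    xc P ≤ l := by
  unfold xc
  split_ifs
  exacts [Nat.zero_le l, Nat.sInf_le h]

theorem hasLinExt_of_fintype {d : ℕ} {P : Set (EuclideanSpace ℝ (Fin d))} {ι κ : Type*}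
    [Fintype ι] [Fintype κ] (φ : (ι → ℝ) →ᵃ[ℝ] EuclideanSpace ℝ (Fin d))
    (a : κ → (ι → ℝ) →ᵃ[ℝ] ℝ) (hP : P = φ '' {u | ∀ j, 0 ≤ a j u}) :
    HasLinExt P (Fintype.card κ) := by
  let e : EuclideanSpace ℝ (Fin (Fintype.card ι)) ≃ₗ[ℝ] (ι → ℝ) :=
    (WithLp.linearEquiv 2 ℝ _).trans (LinearEquiv.funCongrLeft ℝ ℝ (Fintype.equivFin ι))
  let eκ := Fintype.equivFin κ
  refine ⟨_, φ.comp e.toLinearMap.toAffineMap,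
    fun j => (a (eκ.symm j)).comp e.toLinearMap.toAffineMap, ?_⟩
  have hpre : {x | ∀ j, 0 ≤ (a (eκ.symm j)).comp e.toLinearMap.toAffineMap x}
      = e ⁻¹' {u | ∀ j, 0 ≤ a j u} := by
    ext x
    exact ⟨fun h j => by simpa using h (eκ j), fun h j => h _⟩
  rw [hpre, AffineMap.coe_comp, image_comp, LinearMap.coe_toAffineMap, LinearEquiv.coe_coe,
    e.surjective.image_preimage, hP]

theorem hasLinExt_of_standardForm {d : ℕ} {P : Set (EuclideanSpace ℝ (Fin d))} {ι κ : Type*}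
    [Fintype ι] [Fintype κ] (φ : (ι → ℝ) →ₗ[ℝ] EuclideanSpace ℝ (Fin d))
    (c : κ → (ι → ℝ) →ₗ[ℝ] ℝ) (r : κ → ℝ) (hP : P = φ '' {u | 0 ≤ u ∧ ∀ j, c j u = r j}) :
    HasLinExt P (Fintype.card ι + 2 * Fintype.card κ) := by
  let a : ι ⊕ κ ⊕ κ → (ι → ℝ) →ᵃ[ℝ] ℝ := Sum.elim (fun i => (LinearMap.proj i).toAffineMap)
    (Sum.elim (fun j => (c j).toAffineMap - AffineMap.const ℝ _ (r j))
      (fun j => AffineMap.const ℝ _ (r j) - (c j).toAffineMap))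
  have hcard : Fintype.card (ι ⊕ κ ⊕ κ) = Fintype.card ι + 2 * Fintype.card κ := by
    simp only [Fintype.card_sum]; ring
  rw [← hcard]
  refine hasLinExt_of_fintype φ.toAffineMap a (hP.trans ?_)
  congr 1
  ext u
  simp [a, Sum.forall, Pi.le_def, le_antisymm_iff, forall_and, and_comm]

section FiberFormulation

open Finset Pointwise Classical

variable {A B E : Type*} [Fintype A] [Fintype B] [AddCommGroup E] [Module ℝ E]

def fiber (T : Set (A × B)) (b : B) : Finset A := {a | (a, b) ∈ T}

def fiberMass (T : Set (A × B)) (u : (Σ S : Finset A, S) ⊕ B → ℝ) (S : Finset A) : ℝ :=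
  ∑ b with fiber T b = S, u (.inr b)

/-- `u (.inl ⟨S, a⟩)` weights the vertex `a` of the simplex over `S`, and `u (.inr b)` the point
`b`; the block of `S` collects the points `b` with fiber `S`, and both halves of a block carry the
same mass. -/
def fiberLP (T : Set (A × B)) : Set ((Σ S : Finset A, S) ⊕ B → ℝ) :=
  {u | 0 ≤ u ∧ (∀ S : Finset A, ∑ a : S, u (.inl ⟨S, a⟩) = fiberMass T u S) ∧ ∑ b, u (.inr b) = 1}

def fiberMap (f : A → E) (g : B → E) : ((Σ S : Finset A, S) ⊕ B → ℝ) →ₗ[ℝ] E :=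
  Fintype.linearCombination ℝ (Sum.elim (fun p => f p.2) g)

def fiberBlock (f : A → E) (g : B → E) (T : Set (A × B)) (u : (Σ S : Finset A, S) ⊕ B → ℝ)
    (S : Finset A) : E :=
  ∑ a : S, u (.inl ⟨S, a⟩) • f a + ∑ b with fiber T b = S, u (.inr b) • g b

variable (f : A → E) (g : B → E) {T : Set (A × B)}

theorem convex_fiberLP : Convex ℝ (fiberLP T) := by
  rintro u ⟨hu₀, huS, hu₁⟩ v ⟨hv₀, hvS, hv₁⟩ s t hs ht hst
  refine ⟨add_nonneg (smul_nonneg hs hu₀) (smul_nonneg ht hv₀), fun S => ?_, ?_⟩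
  · simp only [fiberMass, Pi.add_apply, Pi.smul_apply, smul_eq_mul, sum_add_distrib, ← mul_sum,
      huS S, hvS S]
  · simp only [Pi.add_apply, Pi.smul_apply, smul_eq_mul, sum_add_distrib, ← mul_sum, hu₁, hv₁,
      mul_one, hst]

theorem fiberMap_apply_eq_sum_fiberBlock (u : (Σ S : Finset A, S) ⊕ B → ℝ) :
    fiberMap f g u = ∑ S, fiberBlock f g T u S := by
  rw [fiberMap, Fintype.linearCombination_apply, Fintype.sum_sum_type, Fintype.sum_sigma,
    ← sum_fiberwise univ (fiber T), ← sum_add_distrib]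
  rfl

theorem fiberBlock_eq_zero {u} (hu : u ∈ fiberLP T) {S : Finset A} (hS : fiberMass T u S = 0) :
    fiberBlock f g T u S = 0 := by
  obtain ⟨hu₀, huS, -⟩ := hu
  have hy := (sum_eq_zero_iff_of_nonneg fun a _ => hu₀ (.inl ⟨S, a⟩)).1 ((huS S).trans hS)
  have hz := (sum_eq_zero_iff_of_nonneg fun b _ => hu₀ (.inr b)).1 hS
  simp only [fiberBlock]
  rw [sum_eq_zero fun a ha => by rw [hy a ha, zero_smul],
    sum_eq_zero fun b hb => by rw [hz b hb, zero_smul], add_zero]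

theorem inv_smul_fiberBlock_mem_convexHull {u} (hu : u ∈ fiberLP T) {S : Finset A}
    (hS : fiberMass T u S ≠ 0) :
    (fiberMass T u S)⁻¹ • fiberBlock f g T u S ∈
      convexHull ℝ ((fun p : A × B => f p.1 + g p.2) '' T) := by
  obtain ⟨hu₀, huS, -⟩ := hu
  have hpos : 0 ≤ (fiberMass T u S)⁻¹ := inv_nonneg.2 (sum_nonneg fun b _ => hu₀ (.inr b))
  have hleft : ∑ a : S, ((fiberMass T u S)⁻¹ * u (.inl ⟨S, a⟩)) • f a ∈
      convexHull ℝ (f '' S) :=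
    (convex_convexHull ℝ _).sum_mem (fun a _ => mul_nonneg hpos (hu₀ _))
      (by rw [← mul_sum, huS S, inv_mul_cancel₀ hS])
      (fun a _ => subset_convexHull ℝ _ (mem_image_of_mem f a.2))
  have hright : ∑ b with fiber T b = S, ((fiberMass T u S)⁻¹ * u (.inr b)) • g b ∈
      convexHull ℝ (g '' {b | fiber T b = S}) :=
    (convex_convexHull ℝ _).sum_mem (fun b _ => mul_nonneg hpos (hu₀ _))
      (by rw [← mul_sum, ← fiberMass, inv_mul_cancel₀ hS])
      (fun b hb => subset_convexHull ℝ _ (mem_image_of_mem g (mem_filter.1 hb).2))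
  have hsub : f '' S + g '' {b | fiber T b = S} ⊆ (fun p : A × B => f p.1 + g p.2) '' T := by
    rintro _ ⟨_, ⟨a, ha, rfl⟩, _, ⟨b, rfl, rfl⟩, rfl⟩
    exact ⟨(a, b), by simpa [fiber] using ha, rfl⟩
  refine convexHull_mono hsub ?_
  rw [convexHull_add, fiberBlock, smul_add, smul_sum, smul_sum]
  simp only [smul_smul]
  exact add_mem_add hleft hright

theorem fiberMap_image_subset_convexHull :
    fiberMap f g '' fiberLP T ⊆ convexHull ℝ ((fun p : A × B => f p.1 + g p.2) '' T) := by
  rintro _ ⟨u, hu, rfl⟩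
  have hblock : ∀ S, fiberBlock f g T u S
      = fiberMass T u S • (fiberMass T u S)⁻¹ • fiberBlock f g T u S := by
    intro S
    by_cases hS : fiberMass T u S = 0
    · rw [hS, zero_smul, fiberBlock_eq_zero f g hu hS]
    · rw [smul_inv_smul₀ hS]
  have hmass : ∑ S, fiberMass T u S = 1 := by
    rw [← hu.2.2, ← sum_fiberwise univ (fiber T)]
    rfl
  rw [fiberMap_apply_eq_sum_fiberBlock f g (T := T), sum_congr rfl fun S _ => hblock S,
    ← finsum_eq_sum_of_fintype]
  exact (convex_convexHull ℝ _).finsum_mem (fun S => sum_nonneg fun b _ => hu.1 (.inr b))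
    (by rwa [finsum_eq_sum_of_fintype]) (fun S hS => inv_smul_fiberBlock_mem_convexHull f g hu hS)

theorem add_mem_fiberMap_image {a : A} {b : B} (hab : (a, b) ∈ T) :
    f a + g b ∈ fiberMap f g '' fiberLP T := by
  have ha : a ∈ fiber T b := by simpa [fiber] using hab
  let u : (Σ S : Finset A, S) ⊕ B → ℝ :=
    Sum.elim (fun p => if p.1 = fiber T b ∧ (p.2 : A) = a then 1 else 0)
      (fun b' => if b' = b then 1 else 0)
  refine ⟨u, ⟨fun i => ?_, fun S => ?_, ?_⟩, ?_⟩
  · rcases i with p | b' <;> dsimp [u] <;> split_ifs <;> norm_num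
  · by_cases hS : S = fiber T b
    · subst hS
      simp [u, fiberMass, sum_attach (fiber T b) (fun a' => if a' = a then (1 : ℝ) else 0), ha]
    · simp [u, fiberMass, hS, Ne.symm hS]
  · simp [u]
  · rw [fiberMap, Fintype.linearCombination_apply, Fintype.sum_sum_type, Fintype.sum_sigma,
      sum_eq_single (fiber T b) (fun S _ hS => by simp [u, hS]) (by simp)]
    simp [u, sum_attach (fiber T b) (fun a' => if a' = a then f a' else 0), ha]

theorem convexHull_image_add_eq_fiberMap_image :
    convexHull ℝ ((fun p : A × B => f p.1 + g p.2) '' T) = fiberMap f g '' fiberLP T := by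
  refine (convexHull_min ?_ (convex_fiberLP.linear_image _)).antisymm
    (fiberMap_image_subset_convexHull f g)
  rintro _ ⟨⟨a, b⟩, hab, rfl⟩
  exact add_mem_fiberMap_image f g hab

theorem card_sigma_finset_le :
    Fintype.card (Σ S : Finset A, S) ≤ 2 ^ Fintype.card A * Fintype.card A := by
  rw [Fintype.card_sigma, ← Fintype.card_finset, ← smul_eq_mul, ← card_univ, ← sum_const]
  exact sum_le_sum fun S _ => by simpa using S.card_le_univ

theorem xc_fiberMap_image_le {d : ℕ} (f : A → EuclideanSpace ℝ (Fin d))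
    (g : B → EuclideanSpace ℝ (Fin d)) (T : Set (A × B)) :
    xc (fiberMap f g '' fiberLP T)
      ≤ 2 ^ Fintype.card A * (Fintype.card A + 2) + Fintype.card B + 2 := by
  let c : Option (Finset A) → ((Σ S : Finset A, S) ⊕ B → ℝ) →ₗ[ℝ] ℝ := fun
    | none => ∑ b, LinearMap.proj (.inr b)
    | some S => ∑ a : S, LinearMap.proj (.inl ⟨S, a⟩)
        - ∑ b with fiber T b = S, LinearMap.proj (.inr b)
  let r : Option (Finset A) → ℝ := fun j => j.elim 1 fun _ => 0
  have hLP : fiberLP T = {u | 0 ≤ u ∧ ∀ j, c j u = r j} := by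
    ext u
    simp [fiberLP, c, r, Option.forall, sub_eq_zero, fiberMass, and_comm]
  have hext := hasLinExt_of_standardForm (fiberMap f g) c r (congrArg _ hLP)
  refine (xc_le_of_hasLinExt hext).trans ?_
  have := card_sigma_finset_le (A := A)
  simp only [Fintype.card_sum, Fintype.card_option, Fintype.card_finset]
  nlinarith

end FiberFormulation

section ZeroOneSplit

open Finset

variable {k m : ℕ}

def leftIndicator (m : ℕ) (s : Finset (Fin k)) : EuclideanSpace ℝ (Fin (k + m)) :=
  WithLp.toLp 2 (Fin.append (fun i => if i ∈ s then 1 else 0) 0)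

def rightIndicator (k : ℕ) (t : Finset (Fin m)) : EuclideanSpace ℝ (Fin (k + m)) :=
  WithLp.toLp 2 (Fin.append 0 (fun j => if j ∈ t then 1 else 0))

theorem exists_leftIndicator_add_rightIndicator_eq {x : EuclideanSpace ℝ (Fin (k + m))}
    (hx : ∀ i, x i = 0 ∨ x i = 1) : ∃ s t, leftIndicator m s + rightIndicator k t = x := by
  classical
  refine ⟨univ.filter fun i => x (Fin.castAdd m i) = 1,
    univ.filter fun j => x (Fin.natAdd k j) = 1, ?_⟩
  ext i
  refine Fin.addCases (fun i => ?_) (fun j => ?_) i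
  · rcases hx (Fin.castAdd m i) with h | h <;> simp [leftIndicator, rightIndicator, h]
  · rcases hx (Fin.natAdd k j) with h | h <;> simp [leftIndicator, rightIndicator, h]

theorem xc_convexHull_zeroOne_le {V : Set (EuclideanSpace ℝ (Fin (k + m)))}
    (hV : V ⊆ {x | ∀ i, x i = 0 ∨ x i = 1}) :
    xc (convexHull ℝ V) ≤ 2 ^ 2 ^ k * (2 ^ k + 2) + 2 ^ m + 2 := by
  let pt := fun p : Finset (Fin k) × Finset (Fin m) => leftIndicator m p.1 + rightIndicator k p.2
  have hpt : pt '' (pt ⁻¹' V) = V := image_preimage_eq_of_subset fun x hx => by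
    obtain ⟨s, t, h⟩ := exists_leftIndicator_add_rightIndicator_eq (hV hx)
    exact ⟨(s, t), h⟩
  rw [← hpt, convexHull_image_add_eq_fiberMap_image]
  simpa using xc_fiberMap_image_le (leftIndicator m) (rightIndicator k) (pt ⁻¹' V)

end ZeroOneSplit

theorem eight_mul_le_two_pow {c : ℕ} (hc : 2 ≤ c) :
    8 * c * (2 ^ c * (c + 2) + 2) ≤ 2 ^ (4 * c + 1) := by
  induction c, hc using Nat.le_induction with
  | base => norm_num
  | succ c hc ih =>
    have hpoly : (c + 1) * (c + 3) ≤ 4 * c * (c + 2) := by nlinarith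
    have := Nat.mul_le_mul_right (2 ^ c) hpoly
    rw [show 4 * (c + 1) + 1 = 4 * c + 1 + 4 by ring, pow_add 2 (4 * c + 1), pow_succ 2 c]
    nlinarith

theorem exists_two_pow_window {d : ℕ} (hd : 9 ≤ d) :
    ∃ k, 1 ≤ k ∧ 4 * 2 ^ k < d ∧ d ≤ 8 * 2 ^ k := by
  have h4 : 4 ≤ Nat.clog 2 d := (Nat.lt_clog_iff_pow_lt one_lt_two).2 (by omega)
  refine ⟨Nat.clog 2 d - 3, by omega, ?_, ?_⟩
  · have := Nat.pow_pred_clog_lt_self one_lt_two (by omega : 1 < d)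
    rwa [Nat.pred_eq_sub_one, show Nat.clog 2 d - 1 = 2 + (Nat.clog 2 d - 3) by omega,
      pow_add] at this
  · have := Nat.le_pow_clog one_lt_two d
    rwa [show Nat.clog 2 d = 3 + (Nat.clog 2 d - 3) by omega, pow_add] at this

theorem exists_add_eq_mul_le {d : ℕ} (hd : 4 ≤ d) :
    ∃ k m, k + m = d ∧ d * (2 ^ 2 ^ k * (2 ^ k + 2) + 2 ^ m + 2) ≤ 9 * 2 ^ d := by
  by_cases hd8 : d ≤ 8
  · refine ⟨0, d, zero_add d, ?_⟩
    interval_cases d <;> norm_num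
  obtain ⟨k, hk, hlow, hhigh⟩ := exists_two_pow_window (by omega : 9 ≤ d)
  have hc : 2 ≤ 2 ^ k := Nat.le_self_pow (by omega) 2
  have hkd : k ≤ d := (Nat.lt_two_pow_self.trans (by omega)).le
  obtain ⟨m, rfl⟩ := Nat.exists_eq_add_of_le hkd
  refine ⟨k, m, rfl, ?_⟩
  have hsmall : (k + m) * (2 ^ 2 ^ k * (2 ^ k + 2) + 2) ≤ 2 ^ (k + m) :=
    calc (k + m) * (2 ^ 2 ^ k * (2 ^ k + 2) + 2)
        ≤ 8 * 2 ^ k * (2 ^ 2 ^ k * (2 ^ k + 2) + 2) := Nat.mul_le_mul_right _ hhigh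
      _ ≤ 2 ^ (4 * 2 ^ k + 1) := eight_mul_le_two_pow hc
      _ ≤ 2 ^ (k + m) := Nat.pow_le_pow_right two_pos hlow
  have hlarge : (k + m) * 2 ^ m ≤ 8 * 2 ^ (k + m) :=
    calc (k + m) * 2 ^ m ≤ 8 * 2 ^ k * 2 ^ m := Nat.mul_le_mul_right _ hhigh
      _ = 8 * 2 ^ (k + m) := by rw [pow_add, mul_assoc]
  nlinarith

theorem statement18 (d : ℕ) (hd : 4 ≤ d) (P : Set (EuclideanSpace ℝ (Fin d)))
    (hP : IsZeroOnePolytope P) :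
    (xc P : ℝ) ≤ 9 * 2 ^ d / d := by
  obtain ⟨k, m, rfl, hbound⟩ := exists_add_eq_mul_le hd
  obtain ⟨V, hV, rfl⟩ := hP
  have hxc := Nat.mul_le_mul_left (k + m) (xc_convexHull_zeroOne_le hV)
  rw [le_div_iff₀ (by norm_cast; omega), mul_comm]
  exact_mod_cast hxc.trans hbound
end
end

section
/- Let d ∈ ℕ, let P be a 0/1-polytope in ℝ^d, and let s ∈ {0,1,…,d}. Then xc(P) ≤ 2^{d−s} + 2^{2^s}·(2^s + 1). -/
open Metric Set

noncomputable section

/-!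
Split the coordinates into a prefix block of size `d - s` and a suffix block of size `s`, and
write each vertex as `(x, y)`. For a prefix `x` let `F(x)` be its fiber, the set of suffixes `y`
with `(x, y)` a vertex. Then `P` is the projection `(λ, μ) ↦ (∑ λ(x) x, ∑_T ∑_{t ∈ T} μ(T, t) t)`
of the polyhedron of `(λ, μ) ≥ 0`, `λ` indexed by prefixes and `μ` by pairs `(T, t)` with
`T ⊆ {0,1}^s`, cut out by `∑ λ = 1` and `∑_{t ∈ T} μ(T, t) = ∑_{F(x) = T} λ(x)` for every `T`:
a feasible point is the convex combination of the vertices `(x, y)` with weights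
`λ(x) μ(F(x), y) / ∑_{F(x') = F(x)} λ(x')`. Equations cost nothing (parametrize the affine
subspace they define), so only the `2^(d-s) + 2^(2^s) 2^s` sign constraints count.
-/
open Finset

section LinearExtensions

variable {d : ℕ} {P : Set (EuclideanSpace ℝ (Fin d))} {E ι : Type*}
  [AddCommGroup E] [Module ℝ E] [FiniteDimensional ℝ E] [Fintype ι]

theorem hasLinExt_of_image (φ : E →ᵃ[ℝ] EuclideanSpace ℝ (Fin d)) (a : ι → E →ᵃ[ℝ] ℝ)
    (hP : P = φ '' {x | ∀ i, 0 ≤ a i x}) : HasLinExt P (Fintype.card ι) := by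
  let e : EuclideanSpace ℝ (Fin (Module.finrank ℝ E)) ≃ₗ[ℝ] E :=
    LinearEquiv.ofFinrankEq _ _ finrank_euclideanSpace_fin
  let σ := Fintype.equivFin ι
  refine ⟨_, φ.comp e.toLinearMap.toAffineMap,
    fun j => (a (σ.symm j)).comp e.toLinearMap.toAffineMap, ?_⟩
  have hpre : {x | ∀ i, 0 ≤ a i x} = e '' {y | ∀ j, 0 ≤ a (σ.symm j) (e y)} := by
    ext x
    refine ⟨fun hx => ⟨e.symm x, fun j => by simpa using hx _, by simp⟩, ?_⟩
    rintro ⟨y, hy, rfl⟩ i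
    simpa using hy (σ i)
  rw [hP, hpre, Set.image_image]
  rfl

theorem hasLinExt_of_image_of_linear_eq {W : Type*} [AddCommGroup W] [Module ℝ W]
    (φ : E →ᵃ[ℝ] EuclideanSpace ℝ (Fin d)) (f : E →ₗ[ℝ] W) (c : W) (a : ι → E →ᵃ[ℝ] ℝ)
    (hP : P = φ '' {x | f x = c ∧ ∀ i, 0 ≤ a i x}) (hne : P.Nonempty) :
    HasLinExt P (Fintype.card ι) := by
  obtain ⟨-, x₀, ⟨hx₀, -⟩, -⟩ := hP ▸ hne
  let ψ : LinearMap.ker f →ᵃ[ℝ] E :=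
    ⟨fun v => (v : E) + x₀, (LinearMap.ker f).subtype, fun v w => by simp [add_assoc]⟩
  have hψ (v : LinearMap.ker f) : ψ v = v + x₀ := rfl
  refine hasLinExt_of_image (φ.comp ψ) (fun i => (a i).comp ψ) ?_
  have hsol : {x | f x = c ∧ ∀ i, 0 ≤ a i x} = ψ '' {v | ∀ i, 0 ≤ (a i).comp ψ v} := by
    ext x
    constructor
    · rintro ⟨hx, hax⟩
      refine ⟨⟨x - x₀, by simp [hx, hx₀]⟩, fun i => ?_, ?_⟩ <;> simp [hψ, hax]
    · rintro ⟨v, hv, rfl⟩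
      exact ⟨by simp [hψ, hx₀], hv⟩
  rw [hP, hsol, Set.image_image]
  rfl

end LinearExtensions

theorem sum_sum_mul_div_smul_add {α β M : Type*} [AddCommGroup M] [Module ℝ M]
    {A : Finset α} {B : Finset β} {a : α → ℝ} {b : β → ℝ} (ha : ∀ x ∈ A, 0 ≤ a x)
    (hb : ∀ y ∈ B, 0 ≤ b y) (hab : ∑ y ∈ B, b y = ∑ x ∈ A, a x) (f : α → M) (g : β → M) :
    ∑ x ∈ A, ∑ y ∈ B, (a x * b y / ∑ x ∈ A, a x) • (f x + g y) =
      ∑ x ∈ A, a x • f x + ∑ y ∈ B, b y • g y := by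
  set S := ∑ x ∈ A, a x
  by_cases hS : S = 0
  · have ha0 : ∀ x ∈ A, a x = 0 := (sum_eq_zero_iff_of_nonneg ha).1 hS
    have hb0 : ∀ y ∈ B, b y = 0 := (sum_eq_zero_iff_of_nonneg hb).1 (hab.trans hS)
    simp +contextual [ha0, hb0]
  simp only [smul_add, sum_add_distrib]
  congr 1
  · refine sum_congr rfl fun x _ => ?_
    rw [← sum_smul, ← sum_div, ← mul_sum, hab, mul_div_cancel_right₀ _ hS]
  · rw [sum_comm]
    refine sum_congr rfl fun y _ => ?_
    rw [← sum_smul, ← sum_div, ← sum_mul, mul_div_cancel_left₀ _ hS]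

namespace FiberFormulation

open scoped Classical

variable {X Y M : Type*} [Fintype X] [Fintype Y] [AddCommGroup M] [Module ℝ M]
  (V : Finset (X × Y))

def fiber (x : X) : Finset Y := univ.filter fun y => (x, y) ∈ V

@[simp]
def vertex {N : Type*} [Add N] (f : X → N) (g : Y → N) (q : X × Y) : N := f q.1 + g q.2

def proj (pre : X → M) (suf : Y → M) : (X → ℝ) × (Finset Y × Y → ℝ) →ₗ[ℝ] M where
  toFun z := ∑ x, z.1 x • pre x + ∑ T, ∑ t ∈ T, z.2 (T, t) • suf t
  map_add' z w := by
    simp only [Prod.fst_add, Prod.snd_add, Pi.add_apply, add_smul, sum_add_distrib]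
    abel
  map_smul' c z := by
    simp [smul_sum, smul_smul]

-- `z.1` is `λ` on all prefixes and `z.2` is `μ` on all pairs `(T, t)`: the equation for `T = ∅`
-- forces `λ(x) = 0` when `x` has empty fiber, and `μ(T, t)` with `t ∉ T` occurs nowhere.
def balance : (X → ℝ) × (Finset Y × Y → ℝ) →ₗ[ℝ] ℝ × (Finset Y → ℝ) where
  toFun z := (∑ x, z.1 x, fun T => ∑ t ∈ T, z.2 (T, t) - ∑ x with fiber V x = T, z.1 x)
  map_add' z w := by
    ext <;> simp [sum_add_distrib]; ring
  map_smul' c z := by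
    ext <;> simp [mul_sum, mul_sub]

theorem balance_eq_iff (z : (X → ℝ) × (Finset Y × Y → ℝ)) :
    balance V z = (1, 0) ↔
      ∑ x, z.1 x = 1 ∧ ∀ T, ∑ t ∈ T, z.2 (T, t) = ∑ x with fiber V x = T, z.1 x := by
  simp [balance, funext_iff, sub_eq_zero]

def feasible : Set ((X → ℝ) × (Finset Y × Y → ℝ)) := {z | 0 ≤ z ∧ balance V z = (1, 0)}

theorem convex_feasible : Convex ℝ (feasible V) :=
  (convex_Ici 0).inter ((convex_singleton _).linear_preimage _)

def coord : X ⊕ (Finset Y × Y) → (X → ℝ) × (Finset Y × Y → ℝ) →ᵃ[ℝ] ℝ :=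
  Sum.elim (fun x => ((LinearMap.proj x).comp (LinearMap.fst ℝ _ _)).toAffineMap)
    (fun q => ((LinearMap.proj q).comp (LinearMap.snd ℝ _ _)).toAffineMap)

theorem feasible_eq_setOf :
    feasible V = {z | balance V z = (1, 0) ∧ ∀ i, 0 ≤ coord i z} := by
  ext z
  simp [feasible, coord, Prod.le_def, Pi.le_def, and_comm]

theorem sum_eq_sum_fiber {N : Type*} [AddCommMonoid N] (h : X × Y → N) :
    ∑ q ∈ V, h q = ∑ T, ∑ x with fiber V x = T, ∑ t ∈ T, h (x, t) := by
  rw [sum_finset_product V univ (fiber V) (by simp [fiber]), ← sum_fiberwise univ (fiber V)]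
  refine sum_congr rfl fun T _ => sum_congr rfl fun x hx => ?_
  rw [(mem_filter.1 hx).2]

def weight (z : (X → ℝ) × (Finset Y × Y → ℝ)) (q : X × Y) : ℝ :=
  z.1 q.1 * z.2 (fiber V q.1, q.2) / ∑ x with fiber V x = fiber V q.1, z.1 x

variable {V}

theorem sum_weight_smul {N : Type*} [AddCommGroup N] [Module ℝ N]
    {z : (X → ℝ) × (Finset Y × Y → ℝ)} (hz : z ∈ feasible V) (f : X → N) (g : Y → N) :
    ∑ q ∈ V, weight V z q • vertex f g q =
      ∑ x, z.1 x • f x + ∑ T, ∑ t ∈ T, z.2 (T, t) • g t := by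
  obtain ⟨⟨hl, hm⟩, hbal⟩ := hz
  have hT := ((balance_eq_iff V z).1 hbal).2
  rw [sum_eq_sum_fiber, ← sum_fiberwise univ (fiber V) (fun x => z.1 x • f x),
    ← sum_add_distrib]
  refine sum_congr rfl fun T _ => ?_
  rw [← sum_sum_mul_div_smul_add (fun x _ => hl x) (fun t _ => hm (T, t)) (hT T)]
  refine sum_congr rfl fun x hx => sum_congr rfl fun t _ => ?_
  rw [weight, (mem_filter.1 hx).2]
  rfl

theorem proj_mem_convexHull (pre : X → M) (suf : Y → M) {z : (X → ℝ) × (Finset Y × Y → ℝ)}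
    (hz : z ∈ feasible V) :
    proj pre suf z ∈ convexHull ℝ (vertex pre suf '' V) := by
  have hsum : ∑ q ∈ V, weight V z q = 1 := by
    simpa [(balance_eq_iff V z).1 hz.2 |>.1] using
      sum_weight_smul hz (fun _ => (1 : ℝ)) (fun _ => 0)
  have hnonneg : ∀ q ∈ V, 0 ≤ weight V z q := fun q _ =>
    div_nonneg (mul_nonneg (hz.1.1 _) (hz.1.2 _)) (sum_nonneg fun x _ => hz.1.1 x)
  rw [show proj pre suf z = ∑ q ∈ V, weight V z q • vertex pre suf q from
    (sum_weight_smul hz pre suf).symm]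
  exact (convex_convexHull ℝ _).sum_mem hnonneg hsum
    fun q hq => subset_convexHull ℝ _ (Set.mem_image_of_mem _ hq)

variable (V)

def lift (q : X × Y) : (X → ℝ) × (Finset Y × Y → ℝ) :=
  (Pi.single q.1 1, Pi.single (fiber V q.1, q.2) 1)

variable {V}

theorem lift_mem_feasible {q : X × Y} (hq : q ∈ V) : lift V q ∈ feasible V := by
  refine ⟨⟨Pi.single_nonneg.2 zero_le_one, Pi.single_nonneg.2 zero_le_one⟩,
    (balance_eq_iff V _).2 ⟨by simp [lift], fun T => ?_⟩⟩
  have hq' : q.2 ∈ fiber V q.1 := by simp [fiber, hq]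
  by_cases hT : fiber V q.1 = T
  · subst hT
    simp [lift, Pi.single_apply, hq']
  · simp [lift, Pi.single_apply, hT, Ne.symm hT]

theorem proj_lift (pre : X → M) (suf : Y → M) {q : X × Y} (hq : q ∈ V) :
    proj pre suf (lift V q) = vertex pre suf q := by
  have hq' : q.2 ∈ fiber V q.1 := by simp [fiber, hq]
  simp [proj, lift, Pi.single_apply, ite_and, hq']

theorem convexHull_eq_image_feasible (pre : X → M) (suf : Y → M) :
    convexHull ℝ (vertex pre suf '' V) = proj pre suf '' feasible V := by
  refine subset_antisymm (convexHull_min ?_ ((convex_feasible V).linear_image _)) ?_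
  · rintro _ ⟨q, hq, rfl⟩
    exact ⟨lift V q, lift_mem_feasible hq, proj_lift pre suf hq⟩
  · rintro _ ⟨z, hz, rfl⟩
    exact proj_mem_convexHull pre suf hz

theorem hasLinExt_convexHull {d : ℕ} (pre : X → EuclideanSpace ℝ (Fin d))
    (suf : Y → EuclideanSpace ℝ (Fin d))
    (hne : (convexHull ℝ (vertex pre suf '' V)).Nonempty) :
    HasLinExt (convexHull ℝ (vertex pre suf '' V))
      (Fintype.card X + 2 ^ Fintype.card Y * Fintype.card Y) := by
  have h := hasLinExt_of_image_of_linear_eq (proj pre suf).toAffineMap (balance V) (1, 0) coord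
    (by rw [convexHull_eq_image_feasible, feasible_eq_setOf]; rfl) hne
  simpa [Fintype.card_finset] using h

end FiberFormulation

section ZeroOneVectors

variable {ι κ₁ κ₂ : Type*} (e : ι ≃ κ₁ ⊕ κ₂)

def prefixVec (x : κ₁ → Bool) : EuclideanSpace ℝ ι :=
  WithLp.toLp 2 fun i => Sum.elim (fun j => if x j then 1 else 0) 0 (e i)

def suffixVec (y : κ₂ → Bool) : EuclideanSpace ℝ ι :=
  WithLp.toLp 2 fun i => Sum.elim 0 (fun j => if y j then 1 else 0) (e i)

theorem exists_prefixVec_add_suffixVec_eq {v : EuclideanSpace ℝ ι} (hv : ∀ i, v i = 0 ∨ v i = 1) :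
    ∃ x y, prefixVec e x + suffixVec e y = v := by
  refine ⟨fun j => decide (v (e.symm (.inl j)) = 1),
    fun j => decide (v (e.symm (.inr j)) = 1), ?_⟩
  ext i
  have hi := e.symm_apply_apply i
  rcases hv i with h | h <;> cases hk : e i <;> simp_all [prefixVec, suffixVec]

end ZeroOneVectors

open FiberFormulation in
theorem IsZeroOnePolytope.exists_eq_convexHull {d : ℕ} {P : Set (EuclideanSpace ℝ (Fin d))}
    {κ₁ κ₂ : Type*} [Fintype κ₁] [Fintype κ₂] (e : Fin d ≃ κ₁ ⊕ κ₂) (hP : IsZeroOnePolytope P) :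
    ∃ V : Finset ((κ₁ → Bool) × (κ₂ → Bool)),
      P = convexHull ℝ (vertex (prefixVec e) (suffixVec e) '' V) := by
  classical
  obtain ⟨V₀, hV₀, rfl⟩ := hP
  refine ⟨univ.filter fun q => vertex (prefixVec e) (suffixVec e) q ∈ V₀, congrArg _ ?_⟩
  ext v
  refine ⟨fun hv => ?_, ?_⟩
  · obtain ⟨x, y, hxy⟩ := exists_prefixVec_add_suffixVec_eq e (hV₀ hv)
    exact ⟨(x, y), mem_filter.2 ⟨mem_univ _, by simpa [hxy] using hv⟩, hxy⟩
  · rintro ⟨q, hq, rfl⟩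
    exact (mem_filter.1 hq).2

theorem statement19 (d s : ℕ) (hs : s ≤ d) (P : Set (EuclideanSpace ℝ (Fin d)))
    (hP : IsZeroOnePolytope P) :
    xc P ≤ 2 ^ (d - s) + 2 ^ (2 ^ s) * (2 ^ s + 1) := by
  rw [xc]
  split_ifs with hdeg
  · exact Nat.zero_le _
  have hne : P.Nonempty := Set.nonempty_iff_ne_empty.2 fun h => hdeg (Or.inl h)
  obtain ⟨V, rfl⟩ :=
    hP.exists_eq_convexHull ((finCongr (Nat.sub_add_cancel hs).symm).trans finSumFinEquiv.symm)
  calc sInf _ ≤ _ := Nat.sInf_le (FiberFormulation.hasLinExt_convexHull _ _ hne)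
    _ = 2 ^ (d - s) + 2 ^ 2 ^ s * 2 ^ s := by simp
    _ ≤ 2 ^ (d - s) + 2 ^ (2 ^ s) * (2 ^ s + 1) := by gcongr; omega
end
end
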